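/- arXiv:2303.07658 — 8 statements merged into one kernel-verified Lean document; each statement's English description precedes it below -/
import Mathlib

section
/- Let f(x) = x^n + 2x^m + 1 where m and n are positive integers with m < n. Then f(x) is a product of cyclotomic polynomials (over the integers) if and only if n = 2m. -/
/-!
Every root of a product of cyclotomic polynomials lies on the unit circle. For a root `z` of
`f = X ^ n + 2 * X ^ m + 1` this gives `‖z ^ n + 1‖ = 2 = ‖z ^ n‖ + 1`, hence `z ^ n = 1` and
`z ^ m = -1`. So the `n` roots of `f` lie among the at most `m < n` roots of `X ^ m + 1`, some root
`z` is multiple, and `0 = z f'(z) = n z ^ n + 2 m z ^ m = n - 2 m`. Conversely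
`X ^ (2 m) + 2 X ^ m + 1 = (X ^ m + 1) ^ 2`, and `X ^ m + 1 = (X ^ (2 m) - 1) / (X ^ m - 1)` is the
product of the `Φ_d` with `d ∣ 2 m`, `d ∤ m`.
-/

open Polynomial Finset

namespace OddLength

/-- A signed permutation of degree `n`, encoded as an underlying permutation of
`Fin n` together with a sign vector. -/
abbrev SP (n : ℕ) := Equiv.Perm (Fin n) × (Fin n → Bool)

/-- The one-line value `σ(i)` of a signed permutation, for `i ∈ [1,n]` (and `0` elsewhere). -/
def sval {n : ℕ} (σ : SP n) (i : ℕ) : ℤ :=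
  if h : 1 ≤ i ∧ i ≤ n then
    (if σ.2 ⟨i - 1, by omega⟩ then (-1 : ℤ) else 1) *
      (((σ.1 ⟨i - 1, by omega⟩ : Fin n) : ℕ) + 1 : ℤ)
  else 0

/-- A signed permutation is *even* (lies in the Weyl group `D_n`) if it has an even
number of negative entries in its one-line notation. -/
def IsEvenSP {n : ℕ} (σ : SP n) : Prop :=
  Even ((Finset.univ.filter (fun i => σ.2 i = true)).card)

instance {n : ℕ} (σ : SP n) : Decidable (IsEvenSP σ) := by
  unfold IsEvenSP; infer_instance

/-- Pairs `1 ≤ i < j ≤ n` of positions. -/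
def pairs (n : ℕ) : Finset (ℕ × ℕ) :=
  (Finset.Icc 1 n ×ˢ Finset.Icc 1 n).filter (fun p => p.1 < p.2)

/-- Number of inversions. -/
def invSP {n : ℕ} (σ : SP n) : ℕ :=
  ((pairs n).filter (fun p => sval σ p.2 < sval σ p.1)).card

/-- Number of negative sum pairs. -/
def nspSP {n : ℕ} (σ : SP n) : ℕ :=
  ((pairs n).filter (fun p => sval σ p.1 + sval σ p.2 < 0)).card

/-- Number of odd inversions (positions of different parity). -/
def oinvSP {n : ℕ} (σ : SP n) : ℕ :=
  ((pairs n).filter (fun p => sval σ p.2 < sval σ p.1 ∧ p.1 % 2 ≠ p.2 % 2)).card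

/-- Number of odd negative sum pairs (positions of different parity). -/
def onspSP {n : ℕ} (σ : SP n) : ℕ :=
  ((pairs n).filter (fun p => sval σ p.1 + sval σ p.2 < 0 ∧ p.1 % 2 ≠ p.2 % 2)).card

/-- The type-`D` Coxeter length `ℓ(σ) = inv(σ) + nsp(σ)`. -/
def ellD {n : ℕ} (σ : SP n) : ℕ := invSP σ + nspSP σ

/-- The type-`D` odd length `L(σ) = oinv(σ) + onsp(σ)`. -/
def LD {n : ℕ} (σ : SP n) : ℕ := oinvSP σ + onspSP σ

/-- The descent value at position `i`, with the type-`D` convention `σ(0) := -σ(2)`. -/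
def dval {n : ℕ} (σ : SP n) (i : ℕ) : ℤ := if i = 0 then -sval σ 2 else sval σ i

/-- Membership in the parabolic quotient `D_n^I`: `σ(i) < σ(i+1)` for all `i ∈ I`,
with the convention `σ(0) = -σ(2)`. -/
def InQuot {n : ℕ} (σ : SP n) (I : Finset ℕ) : Prop :=
  ∀ i ∈ I, dval σ i < dval σ (i + 1)

instance {n : ℕ} (σ : SP n) (I : Finset ℕ) : Decidable (InQuot σ I) := by
  unfold InQuot; infer_instance

/-- `σ` is ascending: `σ(1) < σ(2) < ⋯ < σ(n)`. -/
def Ascending {n : ℕ} (σ : SP n) : Prop :=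
  ∀ i, 1 ≤ i → i < n → sval σ i < sval σ (i + 1)

/-- `σ` is a chessboard element: `σ(i) ≢ σ(i+1) (mod 2)` for all `i ∈ [n-1]`. -/
def Chessboard {n : ℕ} (σ : SP n) : Prop :=
  ∀ i ∈ Finset.Icc 1 (n - 1), sval σ i % 2 ≠ sval σ (i + 1) % 2

instance {n : ℕ} (σ : SP n) : Decidable (Chessboard σ) := by
  unfold Chessboard; infer_instance

/-- The sign-twisted generating function of the odd length over `D_n^I`. -/
noncomputable def genD (n : ℕ) (I : Finset ℕ) : Polynomial ℤ :=
  ∑ σ ∈ Finset.univ.filter (fun σ : SP n => IsEvenSP σ ∧ InQuot σ I),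
    (-1 : Polynomial ℤ) ^ ellD σ * X ^ LD σ


/-- `f` is a product of cyclotomic polynomials `Φ_k` for positive integers `k`. -/
def IsCyclotomicProduct (f : Polynomial ℤ) : Prop :=
  ∃ s : Multiset ℕ, (∀ k ∈ s, 0 < k) ∧
    f = (s.map (fun k => Polynomial.cyclotomic k ℤ)).prod

theorem IsCyclotomicProduct.mul {f g : ℤ[X]} (hf : IsCyclotomicProduct f)
    (hg : IsCyclotomicProduct g) : IsCyclotomicProduct (f * g) := by
  obtain ⟨s, hs, rfl⟩ := hf
  obtain ⟨t, ht, rfl⟩ := hg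
  refine ⟨s + t, fun k hk => (Multiset.mem_add.mp hk).elim (hs k) (ht k), ?_⟩
  rw [Multiset.map_add, Multiset.prod_add]

theorem prod_cyclotomic_sdiff_divisors_eq_X_pow_add_one {m : ℕ} (hm : 0 < m) (R : Type*)
    [CommRing R] : ∏ d ∈ (2 * m).divisors \ m.divisors, cyclotomic d R = X ^ m + 1 := by
  have hsub : m.divisors ⊆ (2 * m).divisors :=
    Nat.divisors_subset_of_dvd (by omega) (dvd_mul_left m 2)
  have h := Finset.prod_sdiff hsub (f := fun d => cyclotomic d R)
  rw [prod_cyclotomic_eq_X_pow_sub_one hm, prod_cyclotomic_eq_X_pow_sub_one (by omega)] at h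
  have hmonic : (X ^ m - 1 : R[X]).Monic := by simpa using monic_X_pow_sub_C (1 : R) hm.ne'
  exact hmonic.isRegular.right (h.trans (by ring))

theorem isCyclotomicProduct_X_pow_add_one {m : ℕ} (hm : 0 < m) :
    IsCyclotomicProduct (X ^ m + 1) := by
  rw [← prod_cyclotomic_sdiff_divisors_eq_X_pow_add_one hm]
  exact ⟨_, fun k hk => Nat.pos_of_mem_divisors (Finset.mem_sdiff.mp hk).1, rfl⟩

theorem IsCyclotomicProduct.exists_pow_eq_one_of_aeval_eq_zero {A : Type*} [CommRing A]
    [IsDomain A] {f : ℤ[X]} (hf : IsCyclotomicProduct f) {z : A} (hz : aeval z f = 0) :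
    ∃ k, 0 < k ∧ z ^ k = 1 := by
  obtain ⟨s, hs, rfl⟩ := hf
  rw [map_multiset_prod, Multiset.map_map, Multiset.prod_eq_zero_iff] at hz
  obtain ⟨k, hk, hzk⟩ := Multiset.mem_map.mp hz
  refine ⟨k, hs k hk, ?_⟩
  simpa [sub_eq_zero] using
    aeval_eq_zero_of_dvd_aeval_eq_zero (cyclotomic.dvd_X_pow_sub_one k ℤ) hzk

theorem pow_eq_one_and_pow_eq_neg_one_of_norm_eq_one {z : ℂ} {m n : ℕ} (hz : ‖z‖ = 1)
    (hroot : z ^ n + 2 * z ^ m + 1 = 0) : z ^ n = 1 ∧ z ^ m = -1 := by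
  have hzn : z ^ n = 1 := by
    refine eq_of_norm_eq_of_norm_add_eq (by simp [hz]) ?_
    rw [show z ^ n + 1 = -2 * z ^ m by linear_combination hroot]
    simp [hz]
    norm_num
  exact ⟨hzn, by linear_combination (hroot - hzn) / 2⟩

theorem exists_isRoot_derivative_of_card_lt_natDegree {K : Type*} [Field K] [IsAlgClosed K]
    {p : K[X]} {s : Finset K} (hs : ∀ z, p.IsRoot z → z ∈ s) (hcard : s.card < p.natDegree) :
    ∃ z, p.IsRoot z ∧ (derivative p).IsRoot z := by
  classical
  have hp : p ≠ 0 := by rintro rfl; simp at hcard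
  have hdup : ¬ p.roots.Nodup := fun hnd => by
    have hsub : p.roots.toFinset ⊆ s := fun z hz =>
      hs z (isRoot_of_mem_roots (Multiset.mem_toFinset.mp hz))
    have := Finset.card_le_card hsub
    rw [Multiset.toFinset_card_of_nodup hnd, IsAlgClosed.card_roots_eq_natDegree] at this
    omega
  rw [Multiset.nodup_iff_count_le_one] at hdup
  push Not at hdup
  obtain ⟨z, hz⟩ := hdup
  rw [count_roots] at hz
  exact ⟨z, (one_lt_rootMultiplicity_iff_isRoot hp).mp hz⟩

theorem X_mul_derivative_X_pow {R : Type*} [CommSemiring R] (n : ℕ) :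
    X * derivative (X ^ n : R[X]) = (n : R[X]) * X ^ n := by
  cases n with
  | zero => simp
  | succ n => rw [derivative_X_pow]; simp only [C_eq_natCast, Nat.add_sub_cancel]; ring

theorem eq_two_mul_of_isCyclotomicProduct {m n : ℕ} (hm : 0 < m) (hmn : m < n)
    (h : IsCyclotomicProduct (X ^ n + 2 * X ^ m + 1)) : n = 2 * m := by
  set F : ℂ[X] := X ^ n + 2 * X ^ m + 1 with hF
  have hroot : ∀ z, F.IsRoot z → z ^ n = 1 ∧ z ^ m = -1 := by
    intro z hz
    have hz' : z ^ n + 2 * z ^ m + 1 = 0 := by simpa [F] using hz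
    obtain ⟨k, hk, hzk⟩ :=
      h.exists_pow_eq_one_of_aeval_eq_zero (z := z) (by simpa [map_ofNat] using hz')
    exact pow_eq_one_and_pow_eq_neg_one_of_norm_eq_one
      (Complex.norm_eq_one_of_pow_eq_one hzk hk.ne') hz'
  have hdeg : F.natDegree = n := by
    rw [hF]; compute_degree! <;> omega
  have hcard : ((X ^ m + C 1 : ℂ[X]).roots.toFinset).card < F.natDegree :=
    calc _ ≤ Multiset.card (X ^ m + C 1 : ℂ[X]).roots := Multiset.toFinset_card_le _
      _ ≤ (X ^ m + C 1 : ℂ[X]).natDegree := card_roots' _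
      _ < F.natDegree := by rw [natDegree_X_pow_add_C, hdeg]; exact hmn
  obtain ⟨z, hzF, hzF'⟩ := exists_isRoot_derivative_of_card_lt_natDegree (fun z hz => by
    rw [Multiset.mem_toFinset, mem_roots (X_pow_add_C_ne_zero hm _)]
    simp [(hroot z hz).2]) hcard
  obtain ⟨hzn, hzm⟩ := hroot z hzF
  have hXF' : X * derivative F = (n : ℂ[X]) * X ^ n + 2 * (m : ℂ[X]) * X ^ m := by
    simp [hF, mul_add, mul_left_comm X, X_mul_derivative_X_pow]
    ring
  have hzXF' : z * (derivative F).eval z = n * z ^ n + 2 * m * z ^ m := by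
    simpa using congrArg (eval z) hXF'
  rw [hzF'.eq_zero, hzn, hzm] at hzXF'
  exact_mod_cast (by linear_combination -hzXF' : (n : ℂ) = 2 * m)

/-- Lemma 6.1: `x^n + 2x^m + 1` is a product of cyclotomic polynomials iff `n = 2m`. -/
theorem stmt0 (m n : ℕ) (hm : 0 < m) (hmn : m < n) :
    IsCyclotomicProduct (X ^ n + 2 * X ^ m + 1) ↔ n = 2 * m := by
  refine ⟨eq_two_mul_of_isCyclotomicProduct hm hmn, ?_⟩
  rintro rfl
  rw [show (X ^ (2 * m) + 2 * X ^ m + 1 : ℤ[X]) = (X ^ m + 1) * (X ^ m + 1) by ring]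
  exact (isCyclotomicProduct_X_pow_add_one hm).mul (isCyclotomicProduct_X_pow_add_one hm)

end OddLength
end

section
/- Let m, n be positive integers with m < n and n ≠ 2m. Then the polynomial x^n + 2x^m + 1 has a complex root of absolute value different from 1. -/
/-!
If every root lay on the unit circle, each root `z` would satisfy `z ^ n = 1` and `z ^ m = -1`,
by the equality case of the triangle inequality for `z ^ n + 1 = -2 z ^ m`. The `n` roots would
then take at most `m < n` distinct values, so some root `z` of `P = X ^ n + 2 X ^ m + 1` is
repeated, and `z P'(z) = n z ^ n + 2 m z ^ m = n - 2 m` vanishes.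
-/

open Polynomial

lemma Complex.eq_one_and_eq_neg_one_of_add_two_mul_add_one_eq_zero {u v : ℂ} (hu : ‖u‖ = 1)
    (hv : ‖v‖ = 1) (h : u + 2 * v + 1 = 0) : u = 1 ∧ v = -1 := by
  have hnorm : ‖u + 1‖ = ‖u‖ + ‖(1 : ℂ)‖ := by
    rw [show u + 1 = -(2 * v) by linear_combination h]
    norm_num [hu, hv]
  have hu1 : u = 1 := (sameRay_iff_norm_add.2 hnorm).eq_of_norm_eq (by simp [hu])
  exact ⟨hu1, by linear_combination h / 2 - hu1 / 2⟩

namespace Polynomial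

variable {R : Type*} [CommRing R]

lemma X_mul_derivative_X_pow (k : ℕ) : X * derivative (X ^ k : R[X]) = C (k : R) * X ^ k := by
  cases k with
  | zero => simp
  | succ k => rw [derivative_X_pow, Nat.add_sub_cancel, mul_left_comm, ← pow_succ']

lemma X_mul_derivative_X_pow_add_C_mul_X_pow_add_one (m n : ℕ) (a : R) :
    X * derivative (X ^ n + C a * X ^ m + 1 : R[X]) =
      C (n : R) * X ^ n + C a * (C (m : R) * X ^ m) := by
  rw [derivative_add, derivative_add, derivative_C_mul, derivative_one, add_zero, mul_add,
    mul_left_comm, X_mul_derivative_X_pow, X_mul_derivative_X_pow]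

lemma natDegree_X_pow_add_C_mul_X_pow_add_one [Nontrivial R] {m n : ℕ} (hmn : m < n) (a : R) :
    (X ^ n + C a * X ^ m + 1 : R[X]).natDegree = n := by
  compute_degree!
  · simp [hmn.ne', (m.zero_le.trans_lt hmn).ne']
  all_goals exact hmn.le

lemma exists_isRoot_derivative_of_card_toFinset_roots_lt [IsDomain R] [DecidableEq R] {p : R[X]}
    (h : p.roots.toFinset.card < Multiset.card p.roots) :
    ∃ z, p.IsRoot z ∧ (derivative p).IsRoot z := by
  have hp : p ≠ 0 := by rintro rfl; simp at h
  have hnodup : ¬ p.roots.Nodup := fun hnd => h.ne (Multiset.toFinset_card_of_nodup hnd)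
  simp only [Multiset.nodup_iff_count_le_one, count_roots, not_forall, not_le] at hnodup
  obtain ⟨z, hz⟩ := hnodup
  exact ⟨z, (one_lt_rootMultiplicity_iff_isRoot hp).1 hz⟩

end Polynomial

theorem stmt1 (m n : ℕ) (hm : 0 < m) (hmn : m < n) (hne : n ≠ 2 * m) :
    ∃ z : ℂ, z ^ n + 2 * z ^ m + 1 = 0 ∧ ‖z‖ ≠ 1 := by
  by_contra! hcircle
  set P : ℂ[X] := X ^ n + C 2 * X ^ m + 1
  have heval (z : ℂ) : P.eval z = z ^ n + 2 * z ^ m + 1 := by simp [P]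
  have hroot {z : ℂ} (hz : P.IsRoot z) : z ^ n = 1 ∧ z ^ m = -1 := by
    rw [IsRoot, heval] at hz
    have hz1 := hcircle z hz
    exact Complex.eq_one_and_eq_neg_one_of_add_two_mul_add_one_eq_zero (by simp [hz1])
      (by simp [hz1]) hz
  have hcard : P.roots.toFinset.card < Multiset.card P.roots := calc
    P.roots.toFinset.card ≤ (nthRoots m (-1 : ℂ)).toFinset.card := by
      refine Finset.card_le_card fun z hz => ?_
      rw [Multiset.mem_toFinset, mem_roots'] at hz
      rw [Multiset.mem_toFinset, mem_nthRoots hm]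
      exact (hroot hz.2).2
    _ ≤ m := (Multiset.toFinset_card_le _).trans (card_nthRoots m _)
    _ < n := hmn
    _ = Multiset.card P.roots := by
      rw [← (IsAlgClosed.splits P).natDegree_eq_card_roots,
        natDegree_X_pow_add_C_mul_X_pow_add_one hmn]
  obtain ⟨z, hz, hz'⟩ := exists_isRoot_derivative_of_card_toFinset_roots_lt hcard
  obtain ⟨hzn, hzm⟩ := hroot hz
  have hzderiv : z * (derivative P).eval z = n * z ^ n + 2 * (m * z ^ m) := by
    simpa only [eval_mul, eval_X, eval_add, eval_C, eval_pow] using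
      congrArg (eval z) (X_mul_derivative_X_pow_add_C_mul_X_pow_add_one m n (2 : ℂ))
  rw [hz'.eq_zero, hzn, hzm] at hzderiv
  exact hne (by exact_mod_cast (by linear_combination -hzderiv : (n : ℂ) = 2 * m))
end

section
/- A signed permutation σ of degree n lies in the Weyl group of type D (i.e., is an even signed permutation) and is ascending (σ(1) < σ(2) < ⋯ < σ(n)) with no odd sandwiches if and only if σ is a chessboard element, i.e., σ(i) ≢ σ(i+1) (mod 2) for all i ∈ [n-1]. -/
open Polynomial Finset

namespace OddLength

/-- The value `r` appears with a negative sign in the one-line notation of `σ`,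
i.e. the sign of `σ⁻¹(r)` is negative. -/
def NegAt {n : ℕ} (σ : SP n) (r : ℕ) : Prop :=
  ∃ i ∈ Finset.Icc 1 n, sval σ i = -(r : ℤ)

/-- `(r,h)` is an odd sandwich in `σ(1)⋯σ(n)` (the case `c = 1`, in which the set of
absolute values `{|σ(1)|,…,|σ(n)|}` is all of `[1,n]` and its minimum is `1`). -/
def OddSandwich {n : ℕ} (σ : SP n) (r h : ℕ) : Prop :=
  r ∈ Finset.Icc 1 (n - 2) ∧ h ∈ Finset.Icc 1 (n - 2) ∧ Odd h ∧ r + h + 1 ≤ n ∧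
  (((NegAt σ r ↔ NegAt σ (r + h + 1)) ∧
      ∀ s ∈ Finset.Icc (r + 1) (r + h), ¬ (NegAt σ r ↔ NegAt σ s)) ∨
    (r = 1 ∧ ¬ (NegAt σ r ↔ NegAt σ (r + h + 1)) ∧
      ∀ s ∈ Finset.Icc (r + 1) (r + h), (NegAt σ r ↔ NegAt σ s)))

/- AUX START -/
section Aux

variable {n : ℕ}

/-- `z` is one of the one-line values of `σ`. -/
def Q (σ : SP n) (z : ℤ) : Prop := ∃ i ∈ Finset.Icc 1 n, sval σ i = z

lemma sval_eq (σ : SP n) (i : ℕ) (h1 : 1 ≤ i) (h2 : i ≤ n) :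
    sval σ i = (if σ.2 ⟨i - 1, by omega⟩ then (-1 : ℤ) else 1) *
      (((σ.1 ⟨i - 1, by omega⟩ : Fin n) : ℕ) + 1 : ℤ) := by
  unfold sval
  rw [dif_pos ⟨h1, h2⟩]

lemma sval_natAbs (σ : SP n) (i : ℕ) (h1 : 1 ≤ i) (h2 : i ≤ n) :
    (sval σ i).natAbs = ((σ.1 ⟨i - 1, by omega⟩ : Fin n) : ℕ) + 1 := by
  rw [sval_eq σ i h1 h2]
  split_ifs <;> omega

lemma sval_natAbs_bounds (σ : SP n) (i : ℕ) (h1 : 1 ≤ i) (h2 : i ≤ n) :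
    1 ≤ (sval σ i).natAbs ∧ (sval σ i).natAbs ≤ n := by
  rw [sval_natAbs σ i h1 h2]
  have := (σ.1 ⟨i - 1, by omega⟩).isLt
  omega

lemma sval_abs_inj (σ : SP n) {i j : ℕ} (hi1 : 1 ≤ i) (hi2 : i ≤ n) (hj1 : 1 ≤ j)
    (hj2 : j ≤ n) (h : (sval σ i).natAbs = (sval σ j).natAbs) : i = j := by
  rw [sval_natAbs σ i hi1 hi2, sval_natAbs σ j hj1 hj2] at h
  have h2 : σ.1 ⟨i - 1, by omega⟩ = σ.1 ⟨j - 1, by omega⟩ := Fin.ext (by omega)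
  have h3 := congrArg Fin.val (σ.1.injective h2)
  simp only [] at h3
  omega

lemma sval_natAbs' (σ : SP n) (i : ℕ) (h1 : 1 ≤ i) (h2 : i ≤ n) (a : Fin n)
    (ha : (a : ℕ) = i - 1) : (sval σ i).natAbs = (σ.1 a : ℕ) + 1 := by
  have hmk : (⟨i - 1, by omega⟩ : Fin n) = a := Fin.ext ha.symm
  rw [sval_natAbs σ i h1 h2, hmk]

lemma sval_abs_surj (σ : SP n) (v : ℕ) (h1 : 1 ≤ v) (h2 : v ≤ n) :
    ∃ i, 1 ≤ i ∧ i ≤ n ∧ (sval σ i).natAbs = v := by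
  have hlt : v - 1 < n := by omega
  have hbn : ((σ.1.symm ⟨v - 1, hlt⟩ : Fin n) : ℕ) < n := (σ.1.symm ⟨v - 1, hlt⟩).isLt
  refine ⟨((σ.1.symm ⟨v - 1, hlt⟩ : Fin n) : ℕ) + 1, by omega, by omega, ?_⟩
  rw [sval_natAbs' σ _ (by omega) (by omega) (σ.1.symm ⟨v - 1, hlt⟩) (by omega),
    Equiv.apply_symm_apply]
  simp only [Fin.val_mk]
  omega

lemma Q_bounds (σ : SP n) {z : ℤ} (h : Q σ z) : 1 ≤ z.natAbs ∧ z.natAbs ≤ n := by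
  obtain ⟨i, hi, hz⟩ := h
  rw [Finset.mem_Icc] at hi
  have := sval_natAbs_bounds σ i hi.1 hi.2
  omega

lemma Q_total (σ : SP n) (v : ℕ) (h1 : 1 ≤ v) (h2 : v ≤ n) :
    Q σ (v : ℤ) ∨ Q σ (-(v : ℤ)) := by
  obtain ⟨i, hi1, hi2, habs⟩ := sval_abs_surj σ v h1 h2
  have : sval σ i = (v : ℤ) ∨ sval σ i = -(v : ℤ) := by omega
  rcases this with h | h
  · exact Or.inl ⟨i, Finset.mem_Icc.mpr ⟨hi1, hi2⟩, h⟩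
  · exact Or.inr ⟨i, Finset.mem_Icc.mpr ⟨hi1, hi2⟩, h⟩

lemma Q_excl (σ : SP n) (v : ℕ) (h1 : 1 ≤ v) (hp : Q σ (v : ℤ)) (hm : Q σ (-(v : ℤ))) :
    False := by
  obtain ⟨i, hi, hvi⟩ := hp
  obtain ⟨j, hj, hvj⟩ := hm
  rw [Finset.mem_Icc] at hi hj
  have hij : i = j := sval_abs_inj σ hi.1 hi.2 hj.1 hj.2 (by omega)
  subst hij
  omega

lemma not_Q_zero (σ : SP n) : ¬ Q σ 0 := by
  rintro ⟨i, hi, h⟩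
  rw [Finset.mem_Icc] at hi
  have := sval_natAbs_bounds σ i hi.1 hi.2
  omega

lemma sval_lt (σ : SP n) (hasc : Ascending σ) :
    ∀ j i, 1 ≤ i → i < j → j ≤ n → sval σ i < sval σ j := by
  intro j
  induction j with
  | zero => omega
  | succ j ih =>
    intro i h1 h2 h3
    rcases Nat.lt_or_ge i j with h | h
    · exact lt_trans (ih i h1 h (by omega)) (hasc j (by omega) (by omega))
    · have hij : i = j := by omega
      subst hij
      exact hasc i h1 (by omega)

lemma lt_of_sval_lt (σ : SP n) (hasc : Ascending σ) {i j : ℕ} (hi1 : 1 ≤ i) (hi2 : i ≤ n)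
    (hj1 : 1 ≤ j) (hj2 : j ≤ n) (h : sval σ i < sval σ j) : i < j := by
  by_contra hc
  push_neg at hc
  rcases Nat.eq_or_lt_of_le hc with h' | h'
  · subst h'
    exact absurd h (lt_irrefl _)
  · have := sval_lt σ hasc i j hj1 h' hi2
    omega

lemma cb_iff (σ : SP n) (hasc : Ascending σ) :
    Chessboard σ ↔ ∀ x y : ℤ, Q σ x → Q σ y → x < y →
      (∀ z : ℤ, x < z → z < y → ¬ Q σ z) → x % 2 ≠ y % 2 := by
  constructor
  · rintro hcb x y ⟨i, hi, hx⟩ ⟨j, hj, hy⟩ hxy hbet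
    rw [Finset.mem_Icc] at hi hj
    have hij : i < j := lt_of_sval_lt σ hasc hi.1 hi.2 hj.1 hj.2 (by omega)
    have hj1 : j = i + 1 := by
      by_contra hc
      have h2 : i + 1 < j := by omega
      have l1 := sval_lt σ hasc (i + 1) i hi.1 (by omega) (by omega)
      have l2 := sval_lt σ hasc j (i + 1) (by omega) h2 hj.2
      exact hbet (sval σ (i + 1)) (by omega) (by omega)
        ⟨i + 1, Finset.mem_Icc.mpr ⟨by omega, by omega⟩, rfl⟩
    subst hj1
    have := hcb i (Finset.mem_Icc.mpr ⟨hi.1, by omega⟩)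
    rw [hx, hy] at this
    exact this
  · intro h i hi
    rw [Finset.mem_Icc] at hi
    have hn : i + 1 ≤ n := by omega
    refine h (sval σ i) (sval σ (i + 1)) ⟨i, Finset.mem_Icc.mpr ⟨hi.1, by omega⟩, rfl⟩
      ⟨i + 1, Finset.mem_Icc.mpr ⟨by omega, hn⟩, rfl⟩ (hasc i hi.1 (by omega)) ?_
    rintro z h1 h2 ⟨k, hk, hzk⟩
    rw [Finset.mem_Icc] at hk
    have l1 : i < k := lt_of_sval_lt σ hasc hi.1 (by omega) hk.1 hk.2 (by omega)
    have l2 : k < i + 1 := lt_of_sval_lt σ hasc hk.1 hk.2 (by omega) hn (by omega)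
    omega

lemma mk_sandwich1 (σ : SP n) (r h : ℕ) (hr : 1 ≤ r) (hh : 1 ≤ h) (hodd : h % 2 = 1)
    (hle : r + h + 1 ≤ n) (hiff : NegAt σ r ↔ NegAt σ (r + h + 1))
    (hall : ∀ s, r + 1 ≤ s → s ≤ r + h → ¬(NegAt σ r ↔ NegAt σ s)) :
    OddSandwich σ r h :=
  ⟨Finset.mem_Icc.mpr ⟨hr, by omega⟩, Finset.mem_Icc.mpr ⟨hh, by omega⟩,
   Nat.odd_iff.mpr hodd, hle,
   Or.inl ⟨hiff, fun s hs => hall s (Finset.mem_Icc.mp hs).1 (Finset.mem_Icc.mp hs).2⟩⟩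

lemma mk_sandwich2 (σ : SP n) (h : ℕ) (hh : 1 ≤ h) (hodd : h % 2 = 1)
    (hle : 1 + h + 1 ≤ n) (hiff : ¬(NegAt σ 1 ↔ NegAt σ (1 + h + 1)))
    (hall : ∀ s, 2 ≤ s → s ≤ 1 + h → (NegAt σ 1 ↔ NegAt σ s)) :
    OddSandwich σ 1 h :=
  ⟨Finset.mem_Icc.mpr ⟨le_rfl, by omega⟩, Finset.mem_Icc.mpr ⟨hh, by omega⟩,
   Nat.odd_iff.mpr hodd, hle,
   Or.inr ⟨rfl, hiff, fun s hs => hall s (Finset.mem_Icc.mp hs).1 (Finset.mem_Icc.mp hs).2⟩⟩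

end Aux
/- AUX END -/
/-- Lemma 4.6 (case `c = 1`): an ascending even signed permutation has no odd
sandwiches iff it is a chessboard element. -/
theorem stmt3 {n : ℕ} (σ : SP n) (heven : IsEvenSP σ) (hasc : Ascending σ) :
    (∀ r h : ℕ, ¬ OddSandwich σ r h) ↔ Chessboard σ := by
  rw [cb_iff σ hasc]
  constructor
  · -- no odd sandwich → chessboard criterion
    intro hns x y hQx hQy hxy hbet hpar
    have hbx := Q_bounds σ hQx
    have hby := Q_bounds σ hQy
    rcases lt_trichotomy y 0 with hy0 | hy0 | hy0
    · -- both values negative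
      obtain ⟨p, hxp, hp1, hpn⟩ : ∃ p : ℕ, x = -(p : ℤ) ∧ 1 ≤ p ∧ p ≤ n :=
        ⟨x.natAbs, by omega, by omega, by omega⟩
      obtain ⟨q, hyq, hq1, hqn⟩ : ∃ q : ℕ, y = -(q : ℤ) ∧ 1 ≤ q ∧ q ≤ n :=
        ⟨y.natAbs, by omega, by omega, by omega⟩
      have hNp : NegAt σ p := by have := hQx; rwa [hxp] at this
      have hNq : NegAt σ q := by have := hQy; rwa [hyq] at this
      have hqp : q + 2 ≤ p := by omega
      apply hns q (p - q - 1)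
      apply mk_sandwich1 σ q (p - q - 1) (by omega) (by omega) (by omega) (by omega)
      · rw [show q + (p - q - 1) + 1 = p from by omega]
        exact iff_of_true hNq hNp
      · intro s hs1 hs2 hiffs
        exact hbet (-(s : ℤ)) (by omega) (by omega) (hiffs.mp hNq)
    · omega
    · rcases lt_trichotomy x 0 with hx0 | hx0 | hx0
      · -- mixed signs
        obtain ⟨p, hxp, hp1, hpn⟩ : ∃ p : ℕ, x = -(p : ℤ) ∧ 1 ≤ p ∧ p ≤ n :=
          ⟨x.natAbs, by omega, by omega, by omega⟩
        obtain ⟨q, hyq, hq1, hqn⟩ : ∃ q : ℕ, y = (q : ℤ) ∧ 1 ≤ q ∧ q ≤ n :=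
          ⟨y.natAbs, by omega, by omega, by omega⟩
        have hpq : p ≠ q := by
          intro h
          exact Q_excl σ q (by omega) (by have := hQy; rwa [hyq] at this)
            (by have := hQx; rwa [hxp, h] at this)
        have hmin : p = 1 ∨ q = 1 := by
          by_contra hc
          push_neg at hc
          rcases Q_total σ 1 le_rfl (by omega) with hQ1 | hQ1
          · exact hbet 1 (by omega) (by omega) hQ1
          · exact hbet (-1) (by omega) (by omega) hQ1
        rcases hmin with hm | hm
        · -- x = -1
          subst hm
          have hN1 : NegAt σ 1 := by have := hQx; rwa [hxp] at this
          have hNq : ¬ NegAt σ q := fun hN =>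
            Q_excl σ q (by omega) (by have := hQy; rwa [hyq] at this) hN
          apply hns 1 (q - 2)
          apply mk_sandwich2 σ (q - 2) (by omega) (by omega) (by omega)
          · rw [show 1 + (q - 2) + 1 = q from by omega]
            intro hiffs
            exact hNq (hiffs.mp hN1)
          · intro s hs1 hs2
            have hQs : ¬ Q σ (s : ℤ) := hbet (s : ℤ) (by omega) (by omega)
            have hNs : NegAt σ s := (Q_total σ s (by omega) (by omega)).resolve_left hQs
            exact iff_of_true hN1 hNs
        · -- y = 1
          subst hm
          have hN1 : ¬ NegAt σ 1 := fun hN =>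
            Q_excl σ 1 le_rfl (by have := hQy; rwa [hyq] at this) hN
          have hNp : NegAt σ p := by have := hQx; rwa [hxp] at this
          apply hns 1 (p - 2)
          apply mk_sandwich2 σ (p - 2) (by omega) (by omega) (by omega)
          · rw [show 1 + (p - 2) + 1 = p from by omega]
            intro hiffs
            exact hN1 (hiffs.mpr hNp)
          · intro s hs1 hs2
            have hNs : ¬ NegAt σ s := fun hN => hbet (-(s : ℤ)) (by omega) (by omega) hN
            exact iff_of_false hN1 hNs
      · omega
      · -- both values positive
        obtain ⟨p, hxp, hp1, hpn⟩ : ∃ p : ℕ, x = (p : ℤ) ∧ 1 ≤ p ∧ p ≤ n :=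
          ⟨x.natAbs, by omega, by omega, by omega⟩
        obtain ⟨q, hyq, hq1, hqn⟩ : ∃ q : ℕ, y = (q : ℤ) ∧ 1 ≤ q ∧ q ≤ n :=
          ⟨y.natAbs, by omega, by omega, by omega⟩
        have hNp : ¬ NegAt σ p := fun hN =>
          Q_excl σ p (by omega) (by have := hQx; rwa [hxp] at this) hN
        have hNq : ¬ NegAt σ q := fun hN =>
          Q_excl σ q (by omega) (by have := hQy; rwa [hyq] at this) hN
        have hpq : p + 2 ≤ q := by omega
        apply hns p (q - p - 1)
        apply mk_sandwich1 σ p (q - p - 1) (by omega) (by omega) (by omega) (by omega)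
        · rw [show p + (q - p - 1) + 1 = q from by omega]
          exact iff_of_false hNp hNq
        · intro s hs1 hs2 hiffs
          have hNs : ¬ NegAt σ s := fun hN => hNp (hiffs.mpr hN)
          rcases Q_total σ s (by omega) (by omega) with hQs | hQs
          · exact hbet (s : ℤ) (by omega) (by omega) hQs
          · exact hNs hQs
  · -- chessboard criterion → no odd sandwich
    intro hcb r h hsand
    obtain ⟨hr, hh, hodd, hle, hcase⟩ := hsand
    rw [Finset.mem_Icc] at hr hh
    rw [Nat.odd_iff] at hodd
    rcases hcase with ⟨hiff, hall⟩ | ⟨hr1, hniff, hall⟩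
    · by_cases hNr : NegAt σ r
      · have hNw : NegAt σ (r + h + 1) := hiff.mp hNr
        have hbetween : ∀ z : ℤ, -((r + h + 1 : ℕ) : ℤ) < z → z < -((r : ℕ) : ℤ) →
            ¬ Q σ z := by
          intro z h1 h2 hQz
          obtain ⟨s, hzs, hs1, hs2⟩ : ∃ s : ℕ, z = -(s : ℤ) ∧ r + 1 ≤ s ∧ s ≤ r + h :=
            ⟨z.natAbs, by omega, by omega, by omega⟩
          exact hall s (Finset.mem_Icc.mpr ⟨hs1, hs2⟩)
            (iff_of_true hNr (by rw [hzs] at hQz; exact hQz))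
        have key := hcb (-((r + h + 1 : ℕ) : ℤ)) (-((r : ℕ) : ℤ)) hNw hNr
          (by push_cast; omega) hbetween
        push_cast at key
        omega
      · have hNw : ¬ NegAt σ (r + h + 1) := fun hN => hNr (hiff.mpr hN)
        have hQr : Q σ ((r : ℕ) : ℤ) := (Q_total σ r (by omega) (by omega)).resolve_right hNr
        have hQw : Q σ (((r + h + 1 : ℕ)) : ℤ) :=
          (Q_total σ (r + h + 1) (by omega) (by omega)).resolve_right hNw
        have hbetween : ∀ z : ℤ, ((r : ℕ) : ℤ) < z → z < (((r + h + 1 : ℕ)) : ℤ) →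
            ¬ Q σ z := by
          intro z h1 h2 hQz
          obtain ⟨s, hzs, hs1, hs2⟩ : ∃ s : ℕ, z = (s : ℤ) ∧ r + 1 ≤ s ∧ s ≤ r + h :=
            ⟨z.natAbs, by omega, by omega, by omega⟩
          have hNs : NegAt σ s := by
            by_contra hc
            exact hall s (Finset.mem_Icc.mpr ⟨hs1, hs2⟩) (iff_of_false hNr hc)
          exact Q_excl σ s (by omega) (by rw [hzs] at hQz; exact hQz) hNs
        have key := hcb ((r : ℕ) : ℤ) (((r + h + 1 : ℕ)) : ℤ) hQr hQw
          (by push_cast; omega) hbetween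
        push_cast at key
        omega
    · subst hr1
      by_cases hN1 : NegAt σ 1
      · have hNw : ¬ NegAt σ (1 + h + 1) := fun hN => hniff (iff_of_true hN1 hN)
        have hQw : Q σ (((1 + h + 1 : ℕ)) : ℤ) :=
          (Q_total σ (1 + h + 1) (by omega) (by omega)).resolve_right hNw
        have hbetween : ∀ z : ℤ, -(((1 : ℕ)) : ℤ) < z → z < (((1 + h + 1 : ℕ)) : ℤ) →
            ¬ Q σ z := by
          intro z h1 h2 hQz
          have hz0 : z ≠ 0 := fun hz => not_Q_zero σ (hz ▸ hQz)
          obtain ⟨s, hzs, hs1, hs2⟩ : ∃ s : ℕ, z = (s : ℤ) ∧ 1 ≤ s ∧ s ≤ 1 + h :=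
            ⟨z.natAbs, by omega, by omega, by omega⟩
          rcases Nat.eq_or_lt_of_le hs1 with h1s | h1s
          · exact Q_excl σ 1 le_rfl (by rw [hzs, ← h1s] at hQz; exact hQz) hN1
          · have hNs : NegAt σ s := (hall s (Finset.mem_Icc.mpr ⟨by omega, hs2⟩)).mp hN1
            exact Q_excl σ s (by omega) (by rw [hzs] at hQz; exact hQz) hNs
        have key := hcb (-(((1 : ℕ)) : ℤ)) (((1 + h + 1 : ℕ)) : ℤ) hN1 hQw
          (by push_cast; omega) hbetween
        push_cast at key
        omega
      · have hNw : NegAt σ (1 + h + 1) := by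
          by_contra hc
          exact hniff (iff_of_false hN1 hc)
        have hQ1 : Q σ (((1 : ℕ)) : ℤ) := (Q_total σ 1 le_rfl (by omega)).resolve_right hN1
        have hbetween : ∀ z : ℤ, -(((1 + h + 1 : ℕ)) : ℤ) < z → z < (((1 : ℕ)) : ℤ) →
            ¬ Q σ z := by
          intro z h1 h2 hQz
          have hz0 : z ≠ 0 := fun hz => not_Q_zero σ (hz ▸ hQz)
          obtain ⟨s, hzs, hs1, hs2⟩ : ∃ s : ℕ, z = -(s : ℤ) ∧ 1 ≤ s ∧ s ≤ 1 + h :=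
            ⟨z.natAbs, by omega, by omega, by omega⟩
          rcases Nat.eq_or_lt_of_le hs1 with h1s | h1s
          · exact hN1 (by rw [hzs, ← h1s] at hQz; exact hQz)
          · exact hN1 ((hall s (Finset.mem_Icc.mpr ⟨by omega, hs2⟩)).mpr
              (by rw [hzs] at hQz; exact hQz))
        have key := hcb (-(((1 + h + 1 : ℕ)) : ℤ)) (((1 : ℕ)) : ℤ) hNw hQ1
          (by push_cast; omega) hbetween
        push_cast at key
        omega

end OddLength
end

section
/- Let σ be an even signed permutation of degree n with a ∈ [n] and σ(a) > 0, and let σ' = (1,-1)(σ(a),-σ(a))σ, i.e., σ' is obtained from σ by negating the entries with absolute values 1 and σ(a). Then ℓ(σ') = ℓ(σ) + 2|{i ∈ [a-1] : |σ(i)| < σ(a)}|, where ℓ is the type-D Coxeter length, ℓ(σ) = inv(σ) + nsp(σ) with inv(σ) = |{(i,j) : 1 ≤ i < j ≤ n, σ(i) > σ(j)}| and nsp(σ) = |{(i,j) : 1 ≤ i < j ≤ n, σ(i) + σ(j) < 0}|. -/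
open Polynomial Finset

namespace OddLength

/-- The effect on a value of composing with the cycles `(1,-1)(c,-c)`. -/
def flipVal (c x : ℤ) : ℤ := Equiv.swap c (-c) (Equiv.swap (1 : ℤ) (-1) x)

def G (x y : ℤ) : ℕ := (if y < x then 1 else 0) + (if x + y < 0 then 1 else 0)

lemma flip_eq (c x : ℤ) (hc : 0 < c) :
    flipVal c x = if c = 1 then x else if x = 1 then -1 else if x = -1 then 1
      else if x = c then -c else if x = -c then c else x := by
  simp only [flipVal, Equiv.swap_apply_def]
  split_ifs <;> omega

set_option maxHeartbeats 2000000 in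
lemma key (c x y : ℤ) (hc : 0 < c) (hx : 1 ≤ |x|) (hy : 1 ≤ |y|)
    (hxy : |x| ≠ |y|) (hyc : y ≠ -c) :
    G (flipVal c x) (flipVal c y) = G x y + (if y = c ∧ |x| < c then 2 else 0) := by
  rw [flip_eq c x hc, flip_eq c y hc]
  rw [le_abs] at hx hy
  rw [Ne, abs_eq_abs] at hxy
  simp only [abs_lt]
  unfold G
  rcases eq_or_ne c 1 with h1 | h1 <;> simp only [h1, if_pos, if_neg, ite_true, ite_false] <;>
    split_ifs <;> omega

lemma abs_sval {n : ℕ} (σ : SP n) {i : ℕ} (h1 : 1 ≤ i) (h2 : i ≤ n) :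
    |sval σ i| = (((σ.1 ⟨i - 1, by omega⟩ : Fin n) : ℕ) : ℤ) + 1 := by
  rw [sval, dif_pos ⟨h1, h2⟩]
  split_ifs
  · rw [neg_one_mul, abs_neg]; exact abs_of_nonneg (by positivity)
  · rw [one_mul]; exact abs_of_nonneg (by positivity)

lemma one_le_abs_sval {n : ℕ} (σ : SP n) {i : ℕ} (h1 : 1 ≤ i) (h2 : i ≤ n) :
    1 ≤ |sval σ i| := by
  rw [abs_sval σ h1 h2]; omega

lemma abs_sval_inj {n : ℕ} (σ : SP n) {i j : ℕ} (hi1 : 1 ≤ i) (hi2 : i ≤ n)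
    (hj1 : 1 ≤ j) (hj2 : j ≤ n) (h : |sval σ i| = |sval σ j|) : i = j := by
  rw [abs_sval σ hi1 hi2, abs_sval σ hj1 hj2] at h
  have h2 : σ.1 ⟨i - 1, by omega⟩ = σ.1 ⟨j - 1, by omega⟩ := by
    ext
    exact_mod_cast add_right_cancel h
  have h3 := σ.1.injective h2
  have h4 : i - 1 = j - 1 := congrArg Fin.val h3
  omega

lemma ellD_eq_sum {n : ℕ} (τ : SP n) :
    ellD τ = ∑ p ∈ pairs n, G (sval τ p.1) (sval τ p.2) := by
  unfold ellD invSP nspSP G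
  rw [Finset.card_filter, Finset.card_filter, ← Finset.sum_add_distrib]

/-- Lemma 2.3, Coxeter-length part: if `σ' = (1,-1)(σ(a),-σ(a))σ` with `σ(a) > 0`, then
`ℓ(σ') = ℓ(σ) + 2|{i ∈ [a-1] : |σ(i)| < σ(a)}|`. -/
theorem stmt4 {n : ℕ} (σ σ' : SP n) (a : ℕ) (ha : a ∈ Finset.Icc 1 n)
    (heven : IsEvenSP σ) (heven' : IsEvenSP σ') (hpos : 0 < sval σ a)
    (hσ' : ∀ i ∈ Finset.Icc 1 n, sval σ' i = flipVal (sval σ a) (sval σ i)) :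
    ellD σ' = ellD σ +
      2 * ((Finset.Icc 1 (a - 1)).filter (fun i => |sval σ i| < sval σ a)).card := by
  rw [Finset.mem_Icc] at ha
  obtain ⟨ha1, ha2⟩ := ha
  have hmem : ∀ p ∈ pairs n, 1 ≤ p.1 ∧ p.1 ≤ n ∧ 1 ≤ p.2 ∧ p.2 ≤ n ∧ p.1 < p.2 := by
    intro p hp
    simp only [pairs, Finset.mem_filter, Finset.mem_product, Finset.mem_Icc] at hp
    exact ⟨hp.1.1.1, hp.1.1.2, hp.1.2.1, hp.1.2.2, hp.2⟩
  have hpt : ∀ p ∈ pairs n, G (sval σ' p.1) (sval σ' p.2) =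
      G (sval σ p.1) (sval σ p.2) +
        2 * (if p.2 = a ∧ |sval σ p.1| < sval σ a then 1 else 0) := by
    intro p hp
    obtain ⟨h11, h12, h21, h22, hlt⟩ := hmem p hp
    rw [hσ' p.1 (Finset.mem_Icc.mpr ⟨h11, h12⟩), hσ' p.2 (Finset.mem_Icc.mpr ⟨h21, h22⟩)]
    have hxy : |sval σ p.1| ≠ |sval σ p.2| := fun h =>
      absurd (abs_sval_inj σ h11 h12 h21 h22 h) (by omega)
    have hyc : sval σ p.2 ≠ -sval σ a := by
      intro h
      have habs : |sval σ p.2| = |sval σ a| := by rw [h, abs_neg]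
      have hpa : p.2 = a := abs_sval_inj σ h21 h22 ha1 ha2 habs
      rw [hpa] at h
      omega
    rw [key (sval σ a) _ _ hpos (one_le_abs_sval σ h11 h12) (one_le_abs_sval σ h21 h22) hxy hyc]
    congr 1
    have hiff : (sval σ p.2 = sval σ a ∧ |sval σ p.1| < sval σ a) ↔
        (p.2 = a ∧ |sval σ p.1| < sval σ a) := by
      constructor
      · rintro ⟨h, h'⟩
        exact ⟨abs_sval_inj σ h21 h22 ha1 ha2 (by rw [h]), h'⟩
      · rintro ⟨h, h'⟩
        exact ⟨by rw [h], h'⟩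
    rw [if_congr hiff rfl rfl]
    split_ifs <;> omega
  have hcard : ∑ p ∈ pairs n, (if p.2 = a ∧ |sval σ p.1| < sval σ a then 1 else 0) =
      ((Finset.Icc 1 (a - 1)).filter (fun i => |sval σ i| < sval σ a)).card := by
    rw [show (∑ p ∈ pairs n, (if p.2 = a ∧ |sval σ p.1| < sval σ a then 1 else 0)) =
        ((pairs n).filter (fun p => p.2 = a ∧ |sval σ p.1| < sval σ a)).card from
      (Finset.card_filter _ _).symm]
    refine Finset.card_bij' (fun p _ => p.1) (fun i _ => (i, a)) ?_ ?_ ?_ ?_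
    · intro p hp
      simp only [pairs, Finset.mem_filter, Finset.mem_product, Finset.mem_Icc] at hp ⊢
      exact ⟨⟨hp.1.1.1.1, by omega⟩, hp.2.2⟩
    · intro i hi
      simp only [pairs, Finset.mem_filter, Finset.mem_product, Finset.mem_Icc] at hi ⊢
      exact ⟨⟨⟨⟨by omega, by omega⟩, by omega, by omega⟩, by omega⟩, trivial, hi.2⟩
    · intro p hp
      simp only [pairs, Finset.mem_filter, Finset.mem_product, Finset.mem_Icc] at hp
      exact Prod.ext rfl hp.2.1.symm
    · intro i _
      rfl
  rw [ellD_eq_sum σ', Finset.sum_congr rfl hpt, Finset.sum_add_distrib, ← ellD_eq_sum σ,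
    ← Finset.mul_sum, hcard]


end OddLength
end

section
/- Let σ be an even signed permutation of degree n with σ(a) = n for some a ∈ [n], and let σ' = (1,-1)(n,-n)σ. Then ℓ(σ') = ℓ(σ) + 2a - 2 and L(σ') = L(σ) + 2⌊a/2⌋. -/
open Polynomial Finset

namespace OddLength

lemma flipVal_eq' (n x : ℤ) (hn : 2 ≤ n) :
    flipVal n x = if x = n then -n else if x = -n then n
      else if x = 1 then -1 else if x = -1 then 1 else x := by
  simp only [flipVal, Equiv.swap_apply_def]
  split_ifs <;> omega

lemma key' (n u v : ℤ) (P : Prop) [Decidable P] (hn : 2 ≤ n)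
    (hu0 : u ≠ 0) (hun : u ≠ -n) (hul : -n ≤ u) (hur : u ≤ n)
    (hv0 : v ≠ 0) (hvn : v ≠ -n) (hvl : -n ≤ v) (hvr : v ≤ n)
    (huv : u ≠ v) (huv' : u ≠ -v) :
    ((if flipVal n v < flipVal n u ∧ P then 1 else 0) +
     (if flipVal n u + flipVal n v < 0 ∧ P then 1 else 0) : ℕ) =
    ((if v < u ∧ P then 1 else 0) + (if u + v < 0 ∧ P then 1 else 0)) +
    (if v = n ∧ P then 2 else 0) := by
  by_cases hP : P
  · simp only [hP, and_true, flipVal_eq' _ _ hn]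
    split_ifs <;> omega
  · simp [hP]

lemma sval_def' {n : ℕ} (σ : SP n) (i : ℕ) (h1 : 1 ≤ i) (h2 : i ≤ n) :
    sval σ i = (if σ.2 ⟨i-1, by omega⟩ then (-1:ℤ) else 1) *
      (((σ.1 ⟨i - 1, by omega⟩ : Fin n) : ℕ) + 1 : ℤ) := by
  rw [sval, dif_pos ⟨h1, h2⟩]

lemma sval_bounds' {n : ℕ} (σ : SP n) {i : ℕ} (h1 : 1 ≤ i) (h2 : i ≤ n) :
    sval σ i ≠ 0 ∧ -(n:ℤ) ≤ sval σ i ∧ sval σ i ≤ n := by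
  rw [sval_def' σ i h1 h2]
  have hk : ((σ.1 ⟨i-1, by omega⟩ : Fin n) : ℕ) < n := (σ.1 _).isLt
  split_ifs <;> omega

lemma sval_inj' {n : ℕ} (σ : SP n) {i j : ℕ} (h1 : 1 ≤ i) (h2 : i ≤ n)
    (h3 : 1 ≤ j) (h4 : j ≤ n)
    (h : sval σ i = sval σ j ∨ sval σ i = -sval σ j) : i = j := by
  rw [sval_def' σ i h1 h2, sval_def' σ j h3 h4] at h
  have hk : ((σ.1 ⟨i-1, by omega⟩ : Fin n) : ℕ) = ((σ.1 ⟨j-1, by omega⟩ : Fin n) : ℕ) := by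
    split_ifs at h <;> omega
  have := σ.1.injective (Fin.ext hk)
  rw [Fin.mk.injEq] at this
  omega

lemma mem_pairs' {n : ℕ} {p : ℕ × ℕ} :
    p ∈ pairs n ↔ 1 ≤ p.1 ∧ p.1 < p.2 ∧ p.2 ≤ n := by
  simp only [pairs, Finset.mem_filter, Finset.mem_product, Finset.mem_Icc]
  omega

lemma card1' {n a : ℕ} (h1 : 1 ≤ a) (h2 : a ≤ n) :
    ((pairs n).filter (fun p => p.2 = a)).card = a - 1 := by
  rw [show a - 1 = (Finset.Icc 1 (a-1)).card by rw [Nat.card_Icc]; omega]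
  apply Finset.card_bij' (fun p _ => p.1) (fun i _ => (i, a))
  case hi =>
    intro p hp
    simp only [Finset.mem_filter, mem_pairs', Finset.mem_Icc] at *
    omega
  case hj =>
    intro i hi
    simp only [Finset.mem_Icc] at hi
    simp [mem_pairs']
    omega
  case left_inv =>
    intro p hp
    simp [mem_pairs'] at hp
    exact Prod.ext rfl hp.2.symm
  case right_inv =>
    intro i _
    rfl

lemma card2' {n a : ℕ} (h1 : 1 ≤ a) (h2 : a ≤ n) :
    ((pairs n).filter (fun p => p.2 = a ∧ p.1 % 2 ≠ p.2 % 2)).card = a / 2 := by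
  rw [show a / 2 = (Finset.range (a/2)).card by rw [Finset.card_range]]
  apply Finset.card_bij' (fun p _ => (a - 1 - p.1) / 2) (fun t _ => (a - 1 - 2 * t, a))
  case hi =>
    intro p hp
    simp [mem_pairs'] at hp
    simp only [Finset.mem_range]
    omega
  case hj =>
    intro t ht
    simp only [Finset.mem_range] at ht
    simp [mem_pairs']
    omega
  case left_inv =>
    intro p hp
    simp [mem_pairs'] at hp
    refine Prod.ext ?_ hp.2.1.symm
    simp only
    omega
  case right_inv =>
    intro t ht
    simp only [Finset.mem_range] at ht
    simp only
    omega


/-- Lemma 2.3, special case `σ(a) = n`: if `σ' = (1,-1)(n,-n)σ`, then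
`ℓ(σ') = ℓ(σ) + 2a - 2` and `L(σ') = L(σ) + 2⌊a/2⌋`. -/
theorem stmt6 {n : ℕ} (σ σ' : SP n) (a : ℕ) (ha : a ∈ Finset.Icc 1 n)
    (heven : IsEvenSP σ) (heven' : IsEvenSP σ') (hσa : sval σ a = (n : ℤ))
    (hσ' : ∀ i ∈ Finset.Icc 1 n, sval σ' i = flipVal ((n : ℤ)) (sval σ i)) :
    ellD σ' = ellD σ + (2 * a - 2) ∧ LD σ' = LD σ + 2 * (a / 2) := by
  rw [Finset.mem_Icc] at ha
  obtain ⟨ha1, ha2⟩ := ha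
  rcases Nat.lt_or_ge n 2 with hn | hn
  · -- n = 1 (n = 0 impossible)
    have hn1 : n = 1 := by omega
    have ha' : a = 1 := by omega
    subst hn1; subst ha'
    have hp : pairs 1 = ∅ := by decide
    simp [ellD, LD, invSP, nspSP, oinvSP, onspSP, hp]
  · have hnz : (2:ℤ) ≤ (n:ℤ) := by exact_mod_cast hn
    -- the master sum identity
    have main : ∀ (P : ℕ × ℕ → Prop) (_ : DecidablePred P),
        (∑ p ∈ pairs n, ((if sval σ' p.2 < sval σ' p.1 ∧ P p then 1 else 0) +
          (if sval σ' p.1 + sval σ' p.2 < 0 ∧ P p then 1 else 0)))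
        = (∑ p ∈ pairs n, ((if sval σ p.2 < sval σ p.1 ∧ P p then 1 else 0) +
          (if sval σ p.1 + sval σ p.2 < 0 ∧ P p then 1 else 0)))
          + 2 * ((pairs n).filter (fun p => p.2 = a ∧ P p)).card := by
      intro P _
      have step : ∀ p ∈ pairs n,
          ((if sval σ' p.2 < sval σ' p.1 ∧ P p then 1 else 0) +
           (if sval σ' p.1 + sval σ' p.2 < 0 ∧ P p then 1 else 0) : ℕ)
          = ((if sval σ p.2 < sval σ p.1 ∧ P p then 1 else 0) +
             (if sval σ p.1 + sval σ p.2 < 0 ∧ P p then 1 else 0))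
            + (if p.2 = a ∧ P p then 2 else 0) := by
        intro p hp
        rw [mem_pairs'] at hp
        obtain ⟨h1, h2, h3⟩ := hp
        have h1' : p.1 ≤ n := by omega
        have h2' : 1 ≤ p.2 := by omega
        rw [hσ' p.1 (by rw [Finset.mem_Icc]; omega),
            hσ' p.2 (by rw [Finset.mem_Icc]; omega)]
        obtain ⟨hu0, hul, hur⟩ := sval_bounds' σ h1 h1'
        obtain ⟨hv0, hvl, hvr⟩ := sval_bounds' σ h2' h3
        have hun : sval σ p.1 ≠ -(n:ℤ) := by
          intro h
          rcases eq_or_ne p.1 a with rfl | hne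
          · rw [hσa] at h; omega
          · exact hne (sval_inj' σ h1 h1' ha1 ha2 (Or.inr (by rw [hσa]; exact h)))
        have hvn : sval σ p.2 ≠ -(n:ℤ) := by
          intro h
          rcases eq_or_ne p.2 a with rfl | hne
          · rw [hσa] at h; omega
          · exact hne (sval_inj' σ h2' h3 ha1 ha2 (Or.inr (by rw [hσa]; exact h)))
        have huv : sval σ p.1 ≠ sval σ p.2 := by
          intro h
          have := sval_inj' σ h1 h1' h2' h3 (Or.inl h)
          omega
        have huv' : sval σ p.1 ≠ -sval σ p.2 := by
          intro h
          have := sval_inj' σ h1 h1' h2' h3 (Or.inr h)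
          omega
        have hiff : (sval σ p.2 = (n:ℤ) ∧ P p) ↔ (p.2 = a ∧ P p) := by
          constructor
          · rintro ⟨h, hP⟩
            exact ⟨sval_inj' σ h2' h3 ha1 ha2 (Or.inl (by rw [hσa]; exact h)), hP⟩
          · rintro ⟨rfl, hP⟩
            exact ⟨hσa, hP⟩
        rw [show (if p.2 = a ∧ P p then 2 else 0 : ℕ)
              = (if sval σ p.2 = (n:ℤ) ∧ P p then 2 else 0) from
            (if_congr hiff rfl rfl).symm]
        exact key' n (sval σ p.1) (sval σ p.2) (P p) hnz hu0 hun hul hur hv0 hvn hvl hvr huv huv'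
      rw [Finset.sum_congr rfl step, Finset.sum_add_distrib]
      congr 1
      rw [← Finset.sum_filter, Finset.sum_const, smul_eq_mul, mul_comm]
    have hell : ∀ τ : SP n, ellD τ = ∑ p ∈ pairs n,
        ((if sval τ p.2 < sval τ p.1 then 1 else 0) +
         (if sval τ p.1 + sval τ p.2 < 0 then 1 else 0)) := by
      intro τ
      rw [ellD, invSP, nspSP, Finset.card_filter, Finset.card_filter,
        ← Finset.sum_add_distrib]
    have hLD : ∀ τ : SP n, LD τ = ∑ p ∈ pairs n,
        ((if sval τ p.2 < sval τ p.1 ∧ p.1 % 2 ≠ p.2 % 2 then 1 else 0) +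
         (if sval τ p.1 + sval τ p.2 < 0 ∧ p.1 % 2 ≠ p.2 % 2 then 1 else 0)) := by
      intro τ
      rw [LD, oinvSP, onspSP, Finset.card_filter, Finset.card_filter,
        ← Finset.sum_add_distrib]
    constructor
    · have := main (fun _ => True) (by infer_instance)
      simp only [and_true] at this
      rw [hell σ', hell σ, this, card1' ha1 ha2]
      omega
    · have := main (fun p => p.1 % 2 ≠ p.2 % 2) (by infer_instance)
      rw [hLD σ', hLD σ, this, card2' ha1 ha2]


end OddLength
end

section
/- For an ascending even signed permutation τ of degree n (τ(1) < τ(2) < ⋯ < τ(n)), the odd negative-sum-pair statistic satisfies onsp(τ) = Σ_{s : τ(s) < 0} ⌊|τ(s)|/2⌋. -/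
open Polynomial Finset

namespace OddLength

section Aux
open Finset

lemma aux_sval_natAbs {n : ℕ} (τ : SP n) {i : ℕ} (h1 : 1 ≤ i) (h2 : i ≤ n) :
    (sval τ i).natAbs = ((τ.1 ⟨i-1, by omega⟩ : Fin n) : ℕ) + 1 := by
  unfold sval; rw [dif_pos ⟨h1,h2⟩]; split <;> omega

lemma aux_sval_natAbs_mem {n : ℕ} (τ : SP n) {i : ℕ} (h1 : 1 ≤ i) (h2 : i ≤ n) :
    (sval τ i).natAbs ∈ Icc 1 n := by
  rw [aux_sval_natAbs τ h1 h2, Finset.mem_Icc]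
  have := (τ.1 ⟨i-1, by omega⟩).isLt; omega

lemma aux_sval_inj {n : ℕ} (τ : SP n) {i j : ℕ} (h1 : 1 ≤ i) (h2 : i ≤ n)
    (h3 : 1 ≤ j) (h4 : j ≤ n) (h : (sval τ i).natAbs = (sval τ j).natAbs) : i = j := by
  rw [aux_sval_natAbs τ h1 h2, aux_sval_natAbs τ h3 h4] at h
  have := τ.1.injective (Fin.ext (by omega : ((τ.1 ⟨i-1, by omega⟩ : Fin n) : ℕ) = τ.1 ⟨j-1, by omega⟩))
  have : i - 1 = j - 1 := congrArg Fin.val this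
  omega

lemma aux_sval_surj {n : ℕ} (τ : SP n) {m : ℕ} (h1 : 1 ≤ m) (h2 : m ≤ n) :
    ∃ i, 1 ≤ i ∧ i ≤ n ∧ (sval τ i).natAbs = m := by
  refine ⟨(τ.1.symm ⟨m-1, by omega⟩ : Fin n) + 1, by omega,
    by have := (τ.1.symm ⟨m-1, by omega⟩).isLt; omega, ?_⟩
  rw [aux_sval_natAbs τ (by omega) (by have := (τ.1.symm ⟨m-1, by omega⟩).isLt; omega)]
  have : (⟨(τ.1.symm ⟨m-1, by omega⟩ : Fin n) + 1 - 1,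
      by have := (τ.1.symm ⟨m-1, by omega⟩).isLt; omega⟩ : Fin n) = τ.1.symm ⟨m-1, by omega⟩ := by
    apply Fin.ext; simp
  rw [this, Equiv.apply_symm_apply]; simp; omega

lemma aux_sval_lt {n : ℕ} {τ : SP n} (hasc : Ascending τ) :
    ∀ j i, 1 ≤ i → i < j → j ≤ n → sval τ i < sval τ j := by
  intro j
  induction j with
  | zero => omega
  | succ m ih =>
    intro i h1 h2 h3
    rcases eq_or_lt_of_le (Nat.lt_succ_iff.mp h2) with rfl | h
    · exact hasc i h1 (by omega)
    · exact lt_trans (ih i h1 h (by omega)) (hasc m (by omega) (by omega))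

lemma aux_card_small {n : ℕ} {τ : SP n} (a : ℕ) (ha1 : 1 ≤ a) (ha2 : a ≤ n) :
    ((Icc 1 n).filter (fun p => (sval τ p).natAbs < a)).card = a - 1 := by
  have : ((Icc 1 n).filter (fun p => (sval τ p).natAbs < a)).card
      = (Icc 1 (a-1)).card := by
    apply Finset.card_bij (fun p _ => (sval τ p).natAbs)
    · intro p hp
      simp only [mem_filter, mem_Icc] at hp ⊢
      have := aux_sval_natAbs_mem τ hp.1.1 hp.1.2
      simp only [mem_Icc] at this; omega
    · intro p hp q hq h
      simp only [mem_filter, mem_Icc] at hp hq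
      exact aux_sval_inj τ hp.1.1 hp.1.2 hq.1.1 hq.1.2 h
    · intro m hm
      simp only [mem_Icc] at hm
      obtain ⟨i, hi1, hi2, hi3⟩ := aux_sval_surj τ hm.1 (by omega)
      exact ⟨i, by simp only [mem_filter, mem_Icc]; omega, hi3⟩
  rw [this, Nat.card_Icc]; omega

lemma aux_small_eq_Ioo {n : ℕ} {τ : SP n} (hasc : Ascending τ) {i : ℕ} (h1 : 1 ≤ i) (h2 : i ≤ n)
    (hneg : sval τ i < 0) :
    (Icc 1 n).filter (fun p => (sval τ p).natAbs < (sval τ i).natAbs)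
      = Ioo i (i + (sval τ i).natAbs) := by
  set a := (sval τ i).natAbs with ha
  have hva : sval τ i = -(a : ℤ) := by omega
  have ha1 : 1 ≤ a := by omega
  have ha2 : a ≤ n := by have := aux_sval_natAbs_mem τ h1 h2; simp only [mem_Icc] at this; omega
  set S := (Icc 1 n).filter (fun p => (sval τ p).natAbs < a) with hS
  have hsub : S ⊆ Ioo i (i + a) := by
    intro s hs
    simp only [hS, mem_filter, mem_Icc] at hs
    obtain ⟨⟨hs1, hs2⟩, hsa⟩ := hs
    have hvs : -(a:ℤ) < sval τ s ∧ sval τ s < (a:ℤ) := by omega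
    have hgt : i < s := by
      by_contra hle
      push_neg at hle
      rcases eq_or_lt_of_le hle with rfl | hlt
      · omega
      · have := aux_sval_lt hasc i s hs1 hlt h2; omega
    have hsub2 : Ioc i s ⊆ S := by
      intro q hq
      simp only [mem_Ioc] at hq
      simp only [hS, mem_filter, mem_Icc]
      refine ⟨⟨by omega, by omega⟩, ?_⟩
      have hq1 : sval τ i < sval τ q := aux_sval_lt hasc q i h1 hq.1 (by omega)
      have hq2 : sval τ q ≤ sval τ s := by
        rcases eq_or_lt_of_le hq.2 with rfl | hlt
        · exact le_rfl
        · exact le_of_lt (aux_sval_lt hasc s q (by omega) hlt hs2)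
      omega
    have := Finset.card_le_card hsub2
    rw [Nat.card_Ioc] at this
    have hcard : S.card = a - 1 := aux_card_small a ha1 ha2
    simp only [mem_Ioo]
    omega
  have hcardS : S.card = a - 1 := aux_card_small a ha1 ha2
  have : (Ioo i (i + a)).card = a - 1 := by rw [Nat.card_Ioo]; omega
  exact Finset.eq_of_subset_of_card_le hsub (by omega)

lemma aux_count_odd_Icc : ∀ a : ℕ, ((Icc 1 a).filter (fun d => d % 2 = 1)).card = (a + 1) / 2 := by
  intro a
  induction a with
  | zero => simp
  | succ m ih =>
    rw [show Icc 1 (m+1) = insert (m+1) (Icc 1 m) by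
      ext x; simp only [Finset.mem_Icc, Finset.mem_insert]; omega]
    rw [Finset.filter_insert]
    split
    · rw [Finset.card_insert_of_notMem (by simp)]
      omega
    · rename_i h
      omega

lemma aux_count_odd_Ioo (i a : ℕ) :
    ((Ioo i (i + a)).filter (fun j => ¬ i % 2 = j % 2)).card = a / 2 := by
  have : ((Ioo i (i + a)).filter (fun j => ¬ i % 2 = j % 2)).card
      = ((Icc 1 (a-1)).filter (fun d => d % 2 = 1)).card := by
    apply Finset.card_bij (fun j _ => j - i)
    · intro j hj; simp only [mem_filter, mem_Ioo, mem_Icc] at hj ⊢; omega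
    · intro p hp q hq h; simp only [mem_filter, mem_Ioo] at hp hq; omega
    · intro d hd
      simp only [mem_filter, mem_Icc] at hd
      exact ⟨i + d, by simp only [mem_filter, mem_Ioo]; omega, by omega⟩
  rw [this, aux_count_odd_Icc]; omega

end Aux

/-- For an ascending even signed permutation `τ`,
`onsp(τ) = Σ_{s : τ(s) < 0} ⌊|τ(s)|/2⌋`. -/
theorem stmt8 {n : ℕ} (τ : SP n) (heven : IsEvenSP τ) (hasc : Ascending τ) :
    onspSP τ =
      ∑ s ∈ (Finset.Icc 1 n).filter (fun s => sval τ s < 0), (sval τ s).natAbs / 2 := by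
  classical
  unfold onspSP
  set T := (pairs n).filter (fun p => sval τ p.1 + sval τ p.2 < 0 ∧ p.1 % 2 ≠ p.2 % 2) with hT
  have hmem : ∀ p ∈ T, p.1 ∈ Finset.Icc 1 n := by
    intro p hp
    simp only [hT, pairs, mem_filter, mem_product] at hp
    exact hp.1.1.1
  rw [Finset.card_eq_sum_card_fiberwise hmem]
  have hfiber : ∀ i ∈ Finset.Icc 1 n,
      (T.filter (fun p => p.1 = i)).card
        = ((Finset.Icc 1 n).filter
            (fun j => i < j ∧ sval τ i + sval τ j < 0 ∧ ¬ i % 2 = j % 2)).card := by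
    intro i hi
    apply Finset.card_bij (fun p _ => p.2)
    · intro p hp
      simp only [hT, pairs, mem_filter, mem_product] at hp ⊢
      obtain ⟨⟨⟨⟨_, h2⟩, hlt⟩, hcond⟩, heq⟩ := hp
      subst heq
      exact ⟨h2, hlt, hcond.1, hcond.2⟩
    · intro p hp q hq h
      simp only [mem_filter] at hp hq
      exact Prod.ext (hp.2.trans hq.2.symm) h
    · intro j hj
      simp only [mem_filter, mem_Icc] at hj
      refine ⟨(i, j), ?_, rfl⟩
      simp only [hT, pairs, mem_filter, mem_product, mem_Icc]
      simp only [mem_Icc] at hi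
      exact ⟨⟨⟨⟨hi, hj.1⟩, hj.2.1⟩, hj.2.2.1, hj.2.2.2⟩, trivial⟩
  rw [Finset.sum_congr rfl hfiber]
  have hkey : ∀ i ∈ Finset.Icc 1 n,
      ((Finset.Icc 1 n).filter
          (fun j => i < j ∧ sval τ i + sval τ j < 0 ∧ ¬ i % 2 = j % 2)).card
        = if sval τ i < 0 then (sval τ i).natAbs / 2 else 0 := by
    intro i hi
    simp only [mem_Icc] at hi
    have habs := aux_sval_natAbs_mem τ hi.1 hi.2
    simp only [mem_Icc] at habs
    by_cases hneg : sval τ i < 0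
    · rw [if_pos hneg]
      set a := (sval τ i).natAbs with ha
      have hS := aux_small_eq_Ioo hasc hi.1 hi.2 hneg
      have : (Finset.Icc 1 n).filter
            (fun j => i < j ∧ sval τ i + sval τ j < 0 ∧ ¬ i % 2 = j % 2)
          = (Finset.Ioo i (i + a)).filter (fun j => ¬ i % 2 = j % 2) := by
        ext j
        simp only [mem_filter, mem_Icc]
        constructor
        · rintro ⟨⟨hj1, hj2⟩, hij, hsum, hpar⟩
          have hvj : sval τ i < sval τ j := aux_sval_lt hasc j i hi.1 hij hj2
          have : j ∈ (Finset.Icc 1 n).filter (fun p => (sval τ p).natAbs < a) := by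
            simp only [mem_filter, mem_Icc]
            refine ⟨⟨hj1, hj2⟩, by omega⟩
          rw [hS] at this
          exact ⟨this, hpar⟩
        · rintro ⟨hjIoo, hpar⟩
          have : j ∈ (Finset.Icc 1 n).filter (fun p => (sval τ p).natAbs < a) := by
            rw [hS]; exact hjIoo
          simp only [mem_filter, mem_Icc] at this
          simp only [mem_Ioo] at hjIoo
          exact ⟨⟨this.1.1, this.1.2⟩, hjIoo.1, by omega, hpar⟩
      rw [this, aux_count_odd_Ioo]
    · rw [if_neg hneg]
      rw [Finset.card_eq_zero, Finset.filter_eq_empty_iff]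
      intro j hj
      simp only [mem_Icc] at hj
      push_neg
      intro hij hsum
      exfalso
      have hvj : sval τ i < sval τ j := aux_sval_lt hasc j i hi.1 hij hj.2
      omega
  rw [Finset.sum_congr rfl hkey, ← Finset.sum_filter]

end OddLength
end

section
/- For every positive integer n, the sign-twisted generating function of the odd length over the quotient D_n^{[n-1]} (the ascending even signed permutations) satisfies Σ_{σ} (-1)^{ℓ(σ)} x^{L(σ)} = ∏_{i=2}^{n} (1 + (-1)^{i-1} x^{⌊i/2⌋}), where the sum runs over all even signed permutations σ of degree n with σ(1) < σ(2) < ⋯ < σ(n). -/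
open Polynomial Finset

/-!
An ascending signed permutation is determined by the set `S ⊆ [n]` of absolute values of its
negative entries: it lists `-a` for `a ∈ S` in decreasing order of `a`, then the positive entries.
It has no inversions, and its entry `-a` forms a negative-sum pair exactly with the `a - 1` entries
of smaller absolute value, which fill the `a - 1` positions right after it; `⌊a/2⌋` of these have
the other parity. Hence `(-1)^ℓ x^L = ∏_{a ∈ S} (-1)^(a-1) x^⌊a/2⌋`. The factor for `a = 1` is `1`,
so toggling `1` matches the even subsets of `[n]` with all subsets of `{2, …, n}`, and the sum over
the latter is the product `∏_{a=2}^{n} (1 + (-1)^(a-1) x^⌊a/2⌋)`.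
-/

theorem Finset.sum_powerset_filter_even_prod {ι R : Type*} [DecidableEq ι] [CommSemiring R]
    {s : Finset ι} {i : ι} {c : ι → R} (hi : i ∈ s) (hc : c i = 1) :
    ∑ t ∈ s.powerset with Even #t, ∏ a ∈ t, c a = ∏ a ∈ s.erase i, (1 + c a) := by
  obtain ⟨s, his, rfl⟩ : ∃ s', i ∉ s' ∧ s = insert i s' :=
    ⟨s.erase i, notMem_erase i s, (insert_erase hi).symm⟩
  rw [erase_insert his, sum_filter, sum_powerset_insert his, ← sum_add_distrib, prod_one_add]
  refine sum_congr rfl fun t ht => ?_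
  have hit : i ∉ t := fun h => his (mem_powerset.1 ht h)
  rw [card_insert_of_notMem hit, prod_insert hit, hc, one_mul]
  by_cases h : Even #t <;> simp [h, Nat.even_add_one]

theorem Nat.eq_Ioc_of_Ioc_subset {s : Finset ℕ} {i : ℕ} (hs : ∀ j ∈ s, i < j ∧ Ioc i j ⊆ s) :
    s = Ioc i (i + #s) := by
  refine eq_of_subset_of_card_le (fun j hj => ?_) (by simp)
  obtain ⟨hij, hsub⟩ := hs j hj
  have := card_le_card hsub
  simp only [Nat.card_Ioc] at this
  simp only [mem_Ioc]
  omega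

theorem Nat.card_Ioc_filter_mod_two_ne (i m : ℕ) :
    #((Ioc i (i + m)).filter (fun j => i % 2 ≠ j % 2)) = (m + 1) / 2 := by
  induction m with
  | zero => simp
  | succ m ih =>
    rw [← add_assoc, ← insert_Ioc_right_eq_Ioc_add_one (by omega), filter_insert]
    split_ifs with h
    · rw [card_insert_of_notMem (by simp), ih]; omega
    · rw [ih]; omega

theorem Fin.exists_val_add_one_eq {n i : ℕ} (hi : i ∈ Set.Icc 1 n) :
    ∃ k : Fin n, (k : ℕ) + 1 = i :=
  ⟨⟨i - 1, by grind⟩, by grind⟩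

namespace OddLength

variable {n : ℕ}

theorem sval_add_one (σ : SP n) (k : Fin n) :
    sval σ (k + 1) = (if σ.2 k then -1 else 1) * ((σ.1 k : ℕ) + 1 : ℤ) := by
  simp [sval]

theorem sval_add_one_neg_iff (σ : SP n) (k : Fin n) : sval σ (k + 1) < 0 ↔ σ.2 k = true := by
  cases h : σ.2 k <;> simp [sval_add_one, h] <;> omega

theorem natAbs_sval_add_one (σ : SP n) (k : Fin n) : (sval σ (k + 1)).natAbs = σ.1 k + 1 := by
  cases h : σ.2 k <;> simp [sval_add_one, h] <;> omega

theorem eq_of_forall_sval_eq {σ τ : SP n} (h : ∀ k : Fin n, sval σ (k + 1) = sval τ (k + 1)) :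
    σ = τ := by
  refine Prod.ext (Equiv.ext fun k => Fin.ext ?_) (funext fun k => ?_)
  · simpa [natAbs_sval_add_one] using congrArg Int.natAbs (h k)
  · rw [Bool.eq_iff_iff, ← sval_add_one_neg_iff, ← sval_add_one_neg_iff, h k]

theorem bijOn_natAbs_sval (σ : SP n) :
    Set.BijOn (fun i => (sval σ i).natAbs) (Set.Icc 1 n) (Set.Icc 1 n) := by
  refine ⟨fun i hi => ?_, fun i hi j hj hij => ?_, fun a ha => ?_⟩
  · obtain ⟨k, rfl⟩ := Fin.exists_val_add_one_eq hi
    simp [natAbs_sval_add_one]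
  · obtain ⟨k, rfl⟩ := Fin.exists_val_add_one_eq hi
    obtain ⟨l, rfl⟩ := Fin.exists_val_add_one_eq hj
    simp only [natAbs_sval_add_one, add_left_inj, Fin.val_inj, EmbeddingLike.apply_eq_iff_eq] at hij
    rw [hij]
  · obtain ⟨k, rfl⟩ := Fin.exists_val_add_one_eq ha
    exact ⟨σ.1.symm k + 1, by simp, by simp [natAbs_sval_add_one]⟩

theorem sval_ne_zero (σ : SP n) {i : ℕ} (hi : i ∈ Set.Icc 1 n) : sval σ i ≠ 0 := by
  have := (bijOn_natAbs_sval σ).mapsTo hi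
  simp only [Set.mem_Icc] at this
  omega

def negSet (σ : SP n) : Finset ℕ :=
  ((Icc 1 n).filter (fun i => sval σ i < 0)).image (fun i => (sval σ i).natAbs)

theorem negSet_subset (σ : SP n) : negSet σ ⊆ Icc 1 n := by
  intro a ha
  obtain ⟨i, hi, rfl⟩ := mem_image.1 ha
  simpa using (bijOn_natAbs_sval σ).mapsTo (by simpa using (mem_filter.1 hi).1)

theorem sum_negSet {M : Type*} [AddCommMonoid M] (σ : SP n) (g : ℕ → M) :
    ∑ a ∈ negSet σ, g a = ∑ i ∈ Icc 1 n, if sval σ i < 0 then g (sval σ i).natAbs else 0 := by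
  rw [← sum_filter, negSet, sum_image]
  exact (bijOn_natAbs_sval σ).injOn.mono (by intro i; simp +contextual)

theorem isEvenSP_iff_even_card_negSet (σ : SP n) : IsEvenSP σ ↔ Even #(negSet σ) := by
  rw [IsEvenSP, card_eq_sum_ones (negSet σ), sum_negSet, ← sum_filter, ← card_eq_sum_ones]
  suffices h : #(univ.filter (fun k => σ.2 k = true)) =
      #((Icc 1 n).filter (fun i => sval σ i < 0)) by
    rw [h]
  refine card_nbij (fun k => (k : ℕ) + 1) (fun k hk => ?_) (fun k _ l _ h => ?_) (fun i hi => ?_)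
  · simpa [sval_add_one_neg_iff] using hk
  · simpa [Fin.ext_iff] using h
  · simp only [coe_filter, mem_Icc, Set.mem_ofPred_eq] at hi
    obtain ⟨k, rfl⟩ := Fin.exists_val_add_one_eq hi.1
    exact ⟨k, by simpa [sval_add_one_neg_iff] using hi.2, rfl⟩

def signedVal (S : Finset ℕ) (a : ℕ) : ℤ := if a ∈ S then -a else a

theorem natAbs_signedVal (S : Finset ℕ) (a : ℕ) : (signedVal S a).natAbs = a := by
  unfold signedVal; split_ifs <;> simp

theorem signedVal_injective (S : Finset ℕ) : Function.Injective (signedVal S) :=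
  Function.LeftInverse.injective (natAbs_signedVal S)

theorem signedVal_natAbs_sval (σ : SP n) {i : ℕ} (hi : i ∈ Set.Icc 1 n) :
    signedVal (negSet σ) (sval σ i).natAbs = sval σ i := by
  have hinj := (bijOn_natAbs_sval σ).injOn
  have hne := sval_ne_zero σ hi
  by_cases hneg : sval σ i < 0
  · have hmem : (sval σ i).natAbs ∈ negSet σ :=
      mem_image_of_mem _ (mem_filter.2 ⟨by simpa using hi, hneg⟩)
    simp only [signedVal, hmem, if_true]
    omega
  · have hmem : (sval σ i).natAbs ∉ negSet σ := by
      simp only [negSet, mem_image, mem_filter, not_exists, not_and, and_imp]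
      intro j hj hjneg hij
      have := hinj (by simpa using hj) hi hij
      subst this
      exact hneg hjneg
    simp only [signedVal, hmem, if_false]
    omega

def valSet (n : ℕ) (S : Finset ℕ) : Finset ℤ := (Icc 1 n).image (signedVal S)

theorem card_valSet (S : Finset ℕ) : #(valSet n S) = n := by
  simp [valSet, card_image_of_injective _ (signedVal_injective S)]

theorem mem_iff_neg_mem_valSet {S : Finset ℕ} (hS : S ⊆ Icc 1 n) {a : ℕ} :
    a ∈ S ↔ -(a : ℤ) ∈ valSet n S := by
  refine ⟨fun ha => mem_image.2 ⟨a, hS ha, by simp [signedVal, ha]⟩, fun ha => ?_⟩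
  obtain ⟨b, hb, hba⟩ := mem_image.1 ha
  by_cases hbS : b ∈ S
  · simp only [signedVal, hbS, if_true, neg_inj, Nat.cast_inj] at hba
    exact hba ▸ hbS
  · simp only [signedVal, hbS, if_false] at hba
    simp only [mem_Icc] at hb
    omega

theorem valSet_injOn : Set.InjOn (valSet n) (Icc 1 n).powerset := by
  intro S hS T hT h
  ext a
  rw [mem_iff_neg_mem_valSet (mem_powerset.1 hS), mem_iff_neg_mem_valSet (mem_powerset.1 hT), h]

theorem image_sval_eq_valSet (σ : SP n) :
    univ.image (fun k : Fin n => sval σ (k + 1)) = valSet n (negSet σ) := by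
  ext v
  simp only [valSet, mem_image, mem_univ, true_and, mem_Icc]
  constructor
  · rintro ⟨k, rfl⟩
    have hk : (k : ℕ) + 1 ∈ Set.Icc 1 n := by simp
    exact ⟨_, (bijOn_natAbs_sval σ).mapsTo hk, signedVal_natAbs_sval σ hk⟩
  · rintro ⟨a, ha, rfl⟩
    obtain ⟨i, hi, rfl⟩ := (bijOn_natAbs_sval σ).surjOn ha
    obtain ⟨k, rfl⟩ := Fin.exists_val_add_one_eq hi
    exact ⟨k, (signedVal_natAbs_sval σ hi).symm⟩

noncomputable def sortedVal (n : ℕ) (S : Finset ℕ) : Fin n ↪o ℤ :=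
  (valSet n S).orderEmbOfFin (card_valSet S)

theorem exists_sortedVal_eq_signedVal (S : Finset ℕ) (k : Fin n) :
    ∃ a ∈ Icc 1 n, sortedVal n S k = signedVal S a :=
  let ⟨a, ha, h⟩ := mem_image.1 (orderEmbOfFin_mem _ _ k)
  ⟨a, ha, h.symm⟩

theorem natAbs_sortedVal_mem (S : Finset ℕ) (k : Fin n) : (sortedVal n S k).natAbs ∈ Icc 1 n := by
  obtain ⟨a, ha, h⟩ := exists_sortedVal_eq_signedVal S k
  rwa [h, natAbs_signedVal]

theorem natAbs_sortedVal_sub_one_lt (S : Finset ℕ) (k : Fin n) :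
    (sortedVal n S k).natAbs - 1 < n := by
  have := mem_Icc.1 (natAbs_sortedVal_mem S k)
  omega

theorem natAbs_sortedVal_sub_one_injective (S : Finset ℕ) :
    Function.Injective (fun k : Fin n => (sortedVal n S k).natAbs - 1) := by
  intro k l h
  obtain ⟨a, ha, hka⟩ := exists_sortedVal_eq_signedVal S k
  obtain ⟨b, hb, hlb⟩ := exists_sortedVal_eq_signedVal S l
  simp only [hka, hlb, natAbs_signedVal] at h
  have hab : a = b := by simp only [mem_Icc] at ha hb; omega
  exact (sortedVal n S).injective (by rw [hka, hlb, hab])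

noncomputable def toSP (n : ℕ) (S : Finset ℕ) : SP n :=
  (Equiv.ofBijective (fun k => ⟨_, natAbs_sortedVal_sub_one_lt S k⟩)
    (Finite.injective_iff_bijective.1 fun _ _ h =>
      natAbs_sortedVal_sub_one_injective S (congrArg Fin.val h)),
    fun k => decide (sortedVal n S k < 0))

theorem sval_toSP_add_one (S : Finset ℕ) (k : Fin n) :
    sval (toSP n S) (k + 1) = sortedVal n S k := by
  have := mem_Icc.1 (natAbs_sortedVal_mem S k)
  by_cases h : sortedVal n S k < 0 <;> simp [sval_add_one, toSP, h] <;> omega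

theorem ascending_iff_strictMonoOn (σ : SP n) :
    Ascending σ ↔ StrictMonoOn (sval σ) (Set.Icc 1 n) := by
  refine ⟨fun h => strictMonoOn_of_lt_add_one Set.ordConnected_Icc fun a _ ha ha1 => h a ha.1 ha1.2,
    fun h i hi hin => h ⟨hi, hin.le⟩ ⟨by omega, hin⟩ (by omega)⟩

theorem ascending_iff_strictMono (σ : SP n) :
    Ascending σ ↔ StrictMono (fun k : Fin n => sval σ (k + 1)) := by
  rw [ascending_iff_strictMonoOn]
  refine ⟨fun h k l hkl => h (by simp) (by simp) (by simpa using hkl), fun h i hi j hj hij => ?_⟩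
  obtain ⟨k, rfl⟩ := Fin.exists_val_add_one_eq hi
  obtain ⟨l, rfl⟩ := Fin.exists_val_add_one_eq hj
  exact h (by simpa using hij)

theorem ascending_toSP (S : Finset ℕ) : Ascending (toSP n S) :=
  (ascending_iff_strictMono _).2 <| by
    simpa only [sval_toSP_add_one] using (sortedVal n S).strictMono

theorem negSet_toSP {S : Finset ℕ} (hS : S ⊆ Icc 1 n) : negSet (toSP n S) = S := by
  refine valSet_injOn (mem_powerset.2 (negSet_subset _)) (mem_powerset.2 hS) ?_
  rw [← image_sval_eq_valSet]
  simp only [sval_toSP_add_one]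
  exact image_orderEmbOfFin_univ _ _

theorem toSP_negSet {σ : SP n} (hσ : Ascending σ) : toSP n (negSet σ) = σ := by
  have hsorted := orderEmbOfFin_unique (card_valSet (negSet σ))
    (fun k => image_sval_eq_valSet σ ▸ mem_image_of_mem _ (mem_univ k))
    ((ascending_iff_strictMono σ).1 hσ)
  exact eq_of_forall_sval_eq fun k => by rw [sval_toSP_add_one, congrFun hsorted k]; rfl

theorem inQuot_Icc_iff_ascending (σ : SP n) : InQuot σ (Icc 1 (n - 1)) ↔ Ascending σ := by
  simp only [InQuot, Ascending, dval, mem_Icc]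
  refine ⟨fun h i hi hin => ?_, fun h i hi => ?_⟩
  · simpa [show i ≠ 0 by omega] using h i ⟨hi, by omega⟩
  · simpa [show i ≠ 0 by omega] using h i hi.1 (by omega)

theorem sum_filter_inQuot_eq_sum_powerset {M : Type*} [AddCommMonoid M] (F : Finset ℕ → M) :
    ∑ σ ∈ univ.filter (fun σ : SP n => IsEvenSP σ ∧ InQuot σ (Icc 1 (n - 1))), F (negSet σ) =
      ∑ S ∈ (Icc 1 n).powerset with Even #S, F S := by
  refine sum_nbij' negSet (toSP n) (fun σ hσ => ?_) (fun S hS => ?_) (fun σ hσ => ?_)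
    (fun S hS => ?_) (fun _ _ => rfl)
  · simp only [mem_filter, mem_powerset, isEvenSP_iff_even_card_negSet] at hσ ⊢
    exact ⟨negSet_subset σ, hσ.2.1⟩
  · simp only [mem_filter, mem_powerset, mem_univ, true_and] at hS ⊢
    rw [isEvenSP_iff_even_card_negSet, negSet_toSP hS.1, inQuot_Icc_iff_ascending]
    exact ⟨hS.2, ascending_toSP S⟩
  · exact toSP_negSet ((inQuot_Icc_iff_ascending σ).1 (mem_filter.1 hσ).2.2)
  · exact negSet_toSP (mem_powerset.1 (mem_filter.1 hS).1)

theorem card_filter_pairs (P : ℕ → ℕ → Prop) [∀ i j, Decidable (P i j)] :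
    #((pairs n).filter (fun p => P p.1 p.2)) =
      ∑ i ∈ Icc 1 n, #((Icc 1 n).filter (fun j => i < j ∧ P i j)) := by
  simp only [pairs, filter_filter, card_filter, sum_product, ite_and]

theorem invSP_eq_zero {σ : SP n} (hσ : Ascending σ) : invSP σ = 0 := by
  rw [invSP, card_eq_zero, filter_eq_empty_iff]
  intro p hp
  simp only [pairs, mem_filter, mem_product, mem_Icc] at hp
  exact (((ascending_iff_strictMonoOn σ).1 hσ) ⟨hp.1.1.1, hp.1.1.2⟩ ⟨by omega, hp.1.2.2⟩ hp.2).asymm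

theorem oinvSP_eq_zero {σ : SP n} (hσ : Ascending σ) : oinvSP σ = 0 := by
  refine Nat.eq_zero_of_le_zero ((card_le_card fun p hp => ?_).trans (invSP_eq_zero hσ).le)
  simp only [mem_filter] at hp ⊢
  exact ⟨hp.1, hp.2.1⟩

def nspRow (σ : SP n) (i : ℕ) : Finset ℕ :=
  (Icc 1 n).filter (fun j => i < j ∧ sval σ i + sval σ j < 0)

theorem nspRow_eq_Ioc {σ : SP n} (hσ : Ascending σ) (i : ℕ) :
    nspRow σ i = Ioc i (i + #(nspRow σ i)) := by
  refine Nat.eq_Ioc_of_Ioc_subset fun j hj => ⟨(mem_filter.1 hj).2.1, fun k hk => ?_⟩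
  simp only [nspRow, mem_filter, mem_Icc, mem_Ioc] at hj hk ⊢
  have := ((ascending_iff_strictMonoOn σ).1 hσ).monotoneOn
    ⟨by omega, by omega⟩ ⟨by omega, hj.1.2⟩ hk.2
  exact ⟨⟨by omega, by omega⟩, hk.1, by omega⟩

theorem card_nspRow {σ : SP n} (hσ : Ascending σ) {i : ℕ} (hi : i ∈ Set.Icc 1 n) :
    #(nspRow σ i) = if sval σ i < 0 then (sval σ i).natAbs - 1 else 0 := by
  have hmono := (ascending_iff_strictMonoOn σ).1 hσ
  have hrow : nspRow σ i =
      (Icc 1 n).filter (fun j => (sval σ j).natAbs < (sval σ i).natAbs ∧ sval σ i < 0) := by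
    refine filter_congr fun j hj => ?_
    have := hmono.lt_iff_lt hi (by simpa using hj)
    omega
  split_ifs with hneg
  · have hbij := bijOn_natAbs_sval σ
    have him := hbij.mapsTo hi
    simp only [Set.mem_Icc] at him
    rw [hrow, ← Nat.card_Ico]
    refine card_nbij (fun j => (sval σ j).natAbs) (fun j hj => ?_) (hbij.injOn.mono fun j hj => ?_)
      (fun a ha => ?_)
    · simp only [coe_filter, mem_Icc, Set.mem_ofPred_eq, coe_Ico, Set.mem_Ico] at hj ⊢
      have := hbij.mapsTo (Set.mem_Icc.2 hj.1)
      simp only [Set.mem_Icc] at this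
      omega
    · simp only [coe_filter, mem_Icc, Set.mem_ofPred_eq] at hj
      exact hj.1
    · simp only [coe_Ico, Set.mem_Ico] at ha
      obtain ⟨j, hj, rfl⟩ := hbij.surjOn (Set.mem_Icc.2 ⟨ha.1, by omega⟩)
      exact ⟨j, by simpa [hneg, ha.2] using hj, rfl⟩
  · rw [hrow]
    simp [hneg]

theorem nspSP_eq_sum_negSet {σ : SP n} (hσ : Ascending σ) :
    nspSP σ = ∑ a ∈ negSet σ, (a - 1) := by
  rw [sum_negSet]
  exact (card_filter_pairs (fun i j => sval σ i + sval σ j < 0)).trans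
    (sum_congr rfl fun i hi => card_nspRow hσ (by simpa using hi))

theorem onspSP_eq_sum_negSet {σ : SP n} (hσ : Ascending σ) :
    onspSP σ = ∑ a ∈ negSet σ, a / 2 := by
  rw [sum_negSet]
  refine (card_filter_pairs (fun i j => sval σ i + sval σ j < 0 ∧ i % 2 ≠ j % 2)).trans
    (sum_congr rfl fun i hi => ?_)
  have hi' : i ∈ Set.Icc 1 n := by simpa using hi
  have hrow : (Icc 1 n).filter (fun j => i < j ∧ sval σ i + sval σ j < 0 ∧ i % 2 ≠ j % 2) =
      (nspRow σ i).filter (fun j => i % 2 ≠ j % 2) := by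
    simp only [nspRow, filter_filter, and_assoc]
  rw [hrow, nspRow_eq_Ioc hσ i, Nat.card_Ioc_filter_mod_two_ne, card_nspRow hσ hi']
  have := sval_ne_zero σ hi'
  split_ifs <;> omega

theorem neg_one_pow_ellD_mul_pow_LD {R : Type*} [CommRing R] {σ : SP n} (hσ : Ascending σ) (x : R) :
    (-1) ^ ellD σ * x ^ LD σ = ∏ a ∈ negSet σ, ((-1) ^ (a - 1) * x ^ (a / 2)) := by
  rw [ellD, LD, invSP_eq_zero hσ, oinvSP_eq_zero hσ, zero_add, zero_add, nspSP_eq_sum_negSet hσ,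
    onspSP_eq_sum_negSet hσ, prod_mul_distrib, prod_pow_eq_pow_sum, prod_pow_eq_pow_sum]

/-- Lemma 5.1: the sign-twisted generating function of the odd length over
`D_n^{[n-1]}` factors as `∏_{i=2}^{n} (1 + (-1)^{i-1} x^{⌊i/2⌋})`. -/
theorem stmt9 (n : ℕ) (hn : 0 < n) :
    genD n (Finset.Icc 1 (n - 1)) =
      ∏ i ∈ Finset.Icc 2 n, (1 + (-1 : Polynomial ℤ) ^ (i - 1) * X ^ (i / 2)) := by
  set c : ℕ → ℤ[X] := fun a => (-1) ^ (a - 1) * X ^ (a / 2)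
  have hweight : ∀ σ ∈ univ.filter (fun σ : SP n => IsEvenSP σ ∧ InQuot σ (Icc 1 (n - 1))),
      (-1 : ℤ[X]) ^ ellD σ * X ^ LD σ = ∏ a ∈ negSet σ, c a :=
    fun σ hσ => neg_one_pow_ellD_mul_pow_LD ((inQuot_Icc_iff_ascending σ).1 (mem_filter.1 hσ).2.2) X
  rw [genD, sum_congr rfl hweight, sum_filter_inQuot_eq_sum_powerset (fun S => ∏ a ∈ S, c a),
    sum_powerset_filter_even_prod (mem_Icc.2 ⟨le_rfl, hn⟩) (by simp [c]), Icc_erase_left,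
    ← Icc_add_one_left_eq_Ioc]
  rfl

end OddLength
end

section
/- For any subset I of {0,1,…,n-1}, the sign-twisted generating function Σ_{σ ∈ D_n^I} (-1)^{ℓ(σ)} x^{L(σ)} equals the same sum restricted to chessboard elements, i.e., Σ_{σ ∈ D_n^I ∩ C_n} (-1)^{ℓ(σ)} x^{L(σ)}, where C_n = {σ ∈ D_n : σ(i) ≢ σ(i+1) (mod 2) for all i ∈ [n-1]}. -/
open Polynomial Finset

namespace OddLength

namespace Aux

variable {n : ℕ}

/-- The value-relabeling map swapping `±v ↔ ±(v+1)`. -/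
def g (v x : ℤ) : ℤ :=
  if x = v then v+1 else if x = v+1 then v else
  if x = -v then -(v+1) else if x = -(v+1) then -v else x

lemma g_zero {v : ℤ} (hv : 1 ≤ v) : g v 0 = 0 := by
  unfold g; split_ifs <;> omega

lemma g_neg {v : ℤ} (hv : 1 ≤ v) (x : ℤ) : g v (-x) = - g v x := by
  unfold g; split_ifs <;> omega

lemma g_id {v x : ℤ} (h : x ≠ v ∧ x ≠ v+1 ∧ x ≠ -v ∧ x ≠ -(v+1)) : g v x = x := by
  unfold g; split_ifs <;> omega

/-- Comparison preserved if at least one of the entries avoids the four special values. -/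
lemma g_lt {v : ℤ} (hv : 1 ≤ v) {x y : ℤ}
    (h : (x ≠ v ∧ x ≠ v+1 ∧ x ≠ -v ∧ x ≠ -(v+1)) ∨ (y ≠ v ∧ y ≠ v+1 ∧ y ≠ -v ∧ y ≠ -(v+1))) :
    (g v y < g v x ↔ y < x) := by
  unfold g; split_ifs <;> omega

lemma g_nsp {v : ℤ} (hv : 1 ≤ v) {x y : ℤ}
    (h : (x ≠ v ∧ x ≠ v+1 ∧ x ≠ -v ∧ x ≠ -(v+1)) ∨ (y ≠ v ∧ y ≠ v+1 ∧ y ≠ -v ∧ y ≠ -(v+1))) :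
    (g v x + g v y < 0 ↔ x + y < 0) := by
  unfold g; split_ifs <;> omega

lemma g_at_v {v : ℤ} (hv : 1 ≤ v) : g v v = v + 1 := by unfold g; split_ifs <;> omega
lemma g_at_v1 {v : ℤ} (hv : 1 ≤ v) : g v (v+1) = v := by unfold g; split_ifs <;> omega
lemma g_at_nv {v : ℤ} (hv : 1 ≤ v) : g v (-v) = -(v+1) := by unfold g; split_ifs <;> omega
lemma g_at_nv1 {v : ℤ} (hv : 1 ≤ v) : g v (-(v+1)) = -v := by unfold g; split_ifs <;> omega

lemma g_exceptional {v x y : ℤ} (hv : 1 ≤ v)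
    (hxy : ((x = v ∨ x = -v) ∧ (y = v+1 ∨ y = -(v+1))) ∨
           ((x = v+1 ∨ x = -(v+1)) ∧ (y = v ∨ y = -v))) :
    (((if y < x then 1 else 0) + (if x + y < 0 then 1 else 0)) +
     ((if g v y < g v x then 1 else 0) + (if g v x + g v y < 0 then 1 else 0))) % 2 = 1 := by
  rcases hxy with ⟨hx | hx, hy | hy⟩ | ⟨hx | hx, hy | hy⟩ <;> subst hx <;> subst hy <;>
    simp only [g_at_v hv, g_at_v1 hv, g_at_nv hv, g_at_nv1 hv] <;> split_ifs <;> omega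

lemma sval_in (σ : SP n) {i : ℕ} (h1 : 1 ≤ i) (h2 : i ≤ n) :
    sval σ i = (if σ.2 ⟨i - 1, by omega⟩ then (-1 : ℤ) else 1) *
      (((σ.1 ⟨i - 1, by omega⟩ : Fin n) : ℕ) + 1 : ℤ) := by
  rw [sval, dif_pos ⟨h1, h2⟩]

lemma sval_out (σ : SP n) {i : ℕ} (h : ¬(1 ≤ i ∧ i ≤ n)) : sval σ i = 0 := by
  rw [sval, dif_neg h]

lemma sval_cases (σ : SP n) {i : ℕ} (h1 : 1 ≤ i) (h2 : i ≤ n) :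
    sval σ i = (((σ.1 ⟨i - 1, by omega⟩ : Fin n) : ℕ) + 1 : ℤ) ∨
    sval σ i = -(((σ.1 ⟨i - 1, by omega⟩ : Fin n) : ℕ) + 1 : ℤ) := by
  rw [sval_in σ h1 h2]
  cases σ.2 ⟨i - 1, by omega⟩ <;> simp

lemma natAbs_sval (σ : SP n) {i : ℕ} (h1 : 1 ≤ i) (h2 : i ≤ n) :
    (sval σ i).natAbs = ((σ.1 ⟨i - 1, by omega⟩ : Fin n) : ℕ) + 1 := by
  rcases sval_cases σ h1 h2 with h | h <;> rw [h] <;> omega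

/-- Position (in `[1,n]`) of the value with absolute value `c`. -/
def posOf (σ : SP n) (c : ℕ) : ℕ :=
  if h : 1 ≤ c ∧ c ≤ n then ((σ.1.symm ⟨c - 1, by omega⟩ : Fin n) : ℕ) + 1 else 0

lemma posOf_in (σ : SP n) {c : ℕ} (h1 : 1 ≤ c) (h2 : c ≤ n) :
    posOf σ c = ((σ.1.symm ⟨c - 1, by omega⟩ : Fin n) : ℕ) + 1 := by
  rw [posOf, dif_pos ⟨h1, h2⟩]

lemma posOf_range (σ : SP n) {c : ℕ} (h1 : 1 ≤ c) (h2 : c ≤ n) :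
    1 ≤ posOf σ c ∧ posOf σ c ≤ n := by
  rw [posOf_in σ h1 h2]
  have := (σ.1.symm ⟨c - 1, by omega⟩).isLt
  omega

lemma natAbs_sval_posOf (σ : SP n) {c : ℕ} (h1 : 1 ≤ c) (h2 : c ≤ n) :
    (sval σ (posOf σ c)).natAbs = c := by
  obtain ⟨hp1, hp2⟩ := posOf_range σ h1 h2
  rw [natAbs_sval σ hp1 hp2]
  have he : (⟨posOf σ c - 1, by omega⟩ : Fin n) = σ.1.symm ⟨c - 1, by omega⟩ := by
    apply Fin.ext
    simp [posOf_in σ h1 h2]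
  rw [he, Equiv.apply_symm_apply]
  simp
  omega

lemma posOf_natAbs (σ : SP n) {i : ℕ} (h1 : 1 ≤ i) (h2 : i ≤ n) :
    posOf σ ((sval σ i).natAbs) = i := by
  rw [natAbs_sval σ h1 h2]
  have hlt := (σ.1 ⟨i - 1, by omega⟩).isLt
  rw [posOf_in σ (by omega) (by omega)]
  have he : (⟨(σ.1 ⟨i - 1, by omega⟩ : ℕ) + 1 - 1, by omega⟩ : Fin n) = σ.1 ⟨i - 1, by omega⟩ := by
    apply Fin.ext; simp
  rw [he, Equiv.symm_apply_apply]
  simp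
  omega

lemma natAbs_range (σ : SP n) {i : ℕ} (h1 : 1 ≤ i) (h2 : i ≤ n) :
    1 ≤ (sval σ i).natAbs ∧ (sval σ i).natAbs ≤ n := by
  rw [natAbs_sval σ h1 h2]
  have := (σ.1 ⟨i - 1, by omega⟩).isLt
  omega

/-- Parity statistic at a position. -/
def F (σ : SP n) (k : ℕ) : ℕ := ((sval σ k).natAbs + k) % 2

/-- Parity statistic at a value. -/
def H (σ : SP n) (c : ℕ) : ℕ := (c + posOf σ c) % 2

lemma const_of_adj (f : ℕ → ℕ) (m : ℕ) (hadj : ∀ k, 1 ≤ k → k + 1 ≤ m → f k = f (k + 1)) :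
    ∀ i, 1 ≤ i → i ≤ m → f i = f 1 := by
  intro i h1 h2
  induction i with
  | zero => omega
  | succ j ih =>
    rcases Nat.eq_zero_or_pos j with h | h
    · subst h; rfl
    · rw [← hadj j h (by omega), ih (by omega) (by omega)]

lemma chess_iff_constF (σ : SP n) :
    Chessboard σ ↔ ∀ i j, 1 ≤ i → i ≤ n → 1 ≤ j → j ≤ n → F σ i = F σ j := by
  constructor
  · intro hch i j hi1 hi2 hj1 hj2
    have hadj : ∀ k, 1 ≤ k → k + 1 ≤ n → F σ k = F σ (k + 1) := by
      intro k hk1 hk2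
      have h := hch k (Finset.mem_Icc.mpr ⟨hk1, by omega⟩)
      unfold F
      omega
    rw [const_of_adj (F σ) n hadj i hi1 hi2, const_of_adj (F σ) n hadj j hj1 hj2]
  · intro hconst k hk
    rw [Finset.mem_Icc] at hk
    have h := hconst k (k + 1) (by omega) (by omega) (by omega) (by omega)
    unfold F at h
    omega

lemma H_eq_F (σ : SP n) {c : ℕ} (h1 : 1 ≤ c) (h2 : c ≤ n) :
    H σ c = F σ (posOf σ c) := by
  unfold H F
  rw [natAbs_sval_posOf σ h1 h2]

lemma F_eq_H (σ : SP n) {i : ℕ} (h1 : 1 ≤ i) (h2 : i ≤ n) :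
    F σ i = H σ ((sval σ i).natAbs) := by
  unfold H F
  rw [posOf_natAbs σ h1 h2]

lemma constF_iff_constH (σ : SP n) :
    (∀ i j, 1 ≤ i → i ≤ n → 1 ≤ j → j ≤ n → F σ i = F σ j) ↔
    (∀ c d, 1 ≤ c → c ≤ n → 1 ≤ d → d ≤ n → H σ c = H σ d) := by
  constructor
  · intro h c d hc1 hc2 hd1 hd2
    rw [H_eq_F σ hc1 hc2, H_eq_F σ hd1 hd2]
    obtain ⟨a1, a2⟩ := posOf_range σ hc1 hc2
    obtain ⟨b1, b2⟩ := posOf_range σ hd1 hd2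
    exact h _ _ a1 a2 b1 b2
  · intro h i j hi1 hi2 hj1 hj2
    rw [F_eq_H σ hi1 hi2, F_eq_H σ hj1 hj2]
    obtain ⟨a1, a2⟩ := natAbs_range σ hi1 hi2
    obtain ⟨b1, b2⟩ := natAbs_range σ hj1 hj2
    exact h _ _ a1 a2 b1 b2

lemma not_chess_iff (σ : SP n) :
    ¬ Chessboard σ ↔ ∃ c, 1 ≤ c ∧ c + 1 ≤ n ∧ posOf σ c % 2 = posOf σ (c + 1) % 2 := by
  rw [chess_iff_constF, constF_iff_constH]
  constructor
  · intro h
    by_contra hne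
    push_neg at hne
    apply h
    have hadj : ∀ k, 1 ≤ k → k + 1 ≤ n → H σ k = H σ (k + 1) := by
      intro k hk1 hk2
      have := hne k hk1 hk2
      unfold H
      omega
    intro c d hc1 hc2 hd1 hd2
    rw [const_of_adj (H σ) n hadj c hc1 hc2, const_of_adj (H σ) n hadj d hd1 hd2]
  · rintro ⟨c, hc1, hc2, hc⟩ hconst
    have h := hconst c (c + 1) (by omega) (by omega) (by omega) (by omega)
    unfold H at h
    omega

/-- The involution step: swap the values `±c ↔ ±(c+1)` keeping signs and positions. -/
def tau (σ : SP n) (c : ℕ) : SP n :=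
  if hc : 1 ≤ c ∧ c + 1 ≤ n then
    (Equiv.swap ⟨c - 1, by omega⟩ ⟨c, by omega⟩ * σ.1, σ.2) else σ

lemma tau_snd (σ : SP n) (c : ℕ) : (tau σ c).2 = σ.2 := by
  unfold tau; split_ifs <;> rfl

lemma sval_tau (σ : SP n) {c : ℕ} (hc1 : 1 ≤ c) (hcn : c + 1 ≤ n) (i : ℕ) :
    sval (tau σ c) i = g (c : ℤ) (sval σ i) := by
  have hvc : (1 : ℤ) ≤ (c : ℤ) := by exact_mod_cast hc1
  by_cases h : 1 ≤ i ∧ i ≤ n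
  · obtain ⟨h1, h2⟩ := h
    rw [tau, dif_pos ⟨hc1, hcn⟩, sval_in _ h1 h2, sval_in σ h1 h2]
    show (if σ.2 ⟨i - 1, by omega⟩ then (-1 : ℤ) else 1) *
        (((Equiv.swap (⟨c - 1, by omega⟩ : Fin n) ⟨c, by omega⟩ (σ.1 ⟨i - 1, by omega⟩) : Fin n) : ℕ) + 1 : ℤ) = _
    by_cases hma : σ.1 ⟨i - 1, by omega⟩ = (⟨c - 1, by omega⟩ : Fin n)
    · rw [hma, Equiv.swap_apply_left]
      cases σ.2 ⟨i - 1, by omega⟩ <;> simp <;> unfold g <;> split_ifs <;> omega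
    · by_cases hmb : σ.1 ⟨i - 1, by omega⟩ = (⟨c, by omega⟩ : Fin n)
      · rw [hmb, Equiv.swap_apply_right]
        cases σ.2 ⟨i - 1, by omega⟩ <;> simp <;> unfold g <;> split_ifs <;> omega
      · rw [Equiv.swap_apply_of_ne_of_ne hma hmb]
        have hva : ((σ.1 ⟨i - 1, by omega⟩ : Fin n) : ℕ) ≠ c - 1 := fun hh => hma (Fin.ext hh)
        have hvb : ((σ.1 ⟨i - 1, by omega⟩ : Fin n) : ℕ) ≠ c := fun hh => hmb (Fin.ext hh)
        cases σ.2 ⟨i - 1, by omega⟩ <;> simp <;> unfold g <;> split_ifs <;> omega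
  · rw [sval_out _ h, sval_out σ h, g_zero hvc]

lemma sval_posOf_cases (σ : SP n) {c : ℕ} (h1 : 1 ≤ c) (h2 : c ≤ n) :
    sval σ (posOf σ c) = (c : ℤ) ∨ sval σ (posOf σ c) = -(c : ℤ) := by
  have := natAbs_sval_posOf σ h1 h2
  omega

lemma mem4 (σ : SP n) {c : ℕ} (hc1 : 1 ≤ c) {j : ℕ}
    (hj : sval σ j = (c : ℤ) ∨ sval σ j = (c : ℤ) + 1 ∨ sval σ j = -(c : ℤ) ∨
      sval σ j = -((c : ℤ) + 1)) :
    j = posOf σ c ∨ j = posOf σ (c + 1) := by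
  have hrange : 1 ≤ j ∧ j ≤ n := by
    by_contra hr
    rw [sval_out σ hr] at hj
    omega
  have habs : (sval σ j).natAbs = c ∨ (sval σ j).natAbs = c + 1 := by omega
  have hpn := posOf_natAbs σ hrange.1 hrange.2
  rcases habs with h | h <;> rw [h] at hpn
  · exact Or.inl hpn.symm
  · exact Or.inr hpn.symm

lemma posOf_tau (σ : SP n) {c : ℕ} (hc1 : 1 ≤ c) (hcn : c + 1 ≤ n) (d : ℕ) :
    posOf (tau σ c) d =
      if d = c then posOf σ (c + 1) else if d = c + 1 then posOf σ c else posOf σ d := by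
  by_cases hd : 1 ≤ d ∧ d ≤ n
  · obtain ⟨hd1, hd2⟩ := hd
    rw [posOf_in _ hd1 hd2, tau, dif_pos ⟨hc1, hcn⟩]
    show ((Equiv.swap (⟨c - 1, by omega⟩ : Fin n) ⟨c, by omega⟩ * σ.1).symm
        ⟨d - 1, by omega⟩ : ℕ) + 1 = _
    rw [Equiv.Perm.mul_def, Equiv.symm_trans_apply, Equiv.symm_swap]
    by_cases h1 : d = c
    · have : (⟨d - 1, by omega⟩ : Fin n) = (⟨c - 1, by omega⟩ : Fin n) := by
        apply Fin.ext; simp; omega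
      rw [this, Equiv.swap_apply_left, if_pos h1, posOf_in σ (by omega) (by omega)]
      congr 2
    · by_cases h2 : d = c + 1
      · have : (⟨d - 1, by omega⟩ : Fin n) = (⟨c, by omega⟩ : Fin n) := by
          apply Fin.ext; simp; omega
        rw [this, Equiv.swap_apply_right, if_neg h1, if_pos h2, posOf_in σ (by omega) (by omega)]
      · have ha : (⟨d - 1, by omega⟩ : Fin n) ≠ (⟨c - 1, by omega⟩ : Fin n) := by
          intro hh
          rw [Fin.ext_iff] at hh
          simp at hh
          omega
        have hb : (⟨d - 1, by omega⟩ : Fin n) ≠ (⟨c, by omega⟩ : Fin n) := by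
          intro hh
          rw [Fin.ext_iff] at hh
          simp at hh
          omega
        rw [Equiv.swap_apply_of_ne_of_ne ha hb, if_neg h1, if_neg h2,
          posOf_in σ hd1 hd2]
  · have h1 : ¬ d = c := by omega
    have h2 : ¬ d = c + 1 := by omega
    rw [if_neg h1, if_neg h2, posOf, dif_neg hd, posOf, dif_neg hd]

/-- The four special values. -/
def In4 (c : ℕ) (x : ℤ) : Prop :=
  x = (c : ℤ) ∨ x = (c : ℤ) + 1 ∨ x = -(c : ℤ) ∨ x = -((c : ℤ) + 1)

lemma not_in4 {c : ℕ} {x : ℤ} (h : ¬ In4 c x) :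
    x ≠ (c : ℤ) ∧ x ≠ (c : ℤ) + 1 ∧ x ≠ -(c : ℤ) ∧ x ≠ -((c : ℤ) + 1) := by
  unfold In4 at h; omega

lemma pairs_mem {pr : ℕ × ℕ} (h : pr ∈ pairs n) :
    1 ≤ pr.1 ∧ pr.1 ≤ n ∧ 1 ≤ pr.2 ∧ pr.2 ≤ n ∧ pr.1 < pr.2 := by
  simp only [pairs, Finset.mem_filter, Finset.mem_product, Finset.mem_Icc] at h
  tauto

section Tau

variable {σ : SP n} {c : ℕ} (hc1 : 1 ≤ c) (hcn : c + 1 ≤ n)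
  (hpar : posOf σ c % 2 = posOf σ (c + 1) % 2)

include hc1 hcn

lemma both_in4 {i j : ℕ} (h1 : In4 c (sval σ i)) (h2 : In4 c (sval σ j)) :
    (i = posOf σ c ∨ i = posOf σ (c + 1)) ∧ (j = posOf σ c ∨ j = posOf σ (c + 1)) :=
  ⟨mem4 σ hc1 h1, mem4 σ hc1 h2⟩

include hpar

lemma lt_tau {i j : ℕ} (hij : i % 2 ≠ j % 2 ∨
    (i ≠ j ∧ ¬(i = posOf σ c ∧ j = posOf σ (c + 1)) ∧ ¬(i = posOf σ (c + 1) ∧ j = posOf σ c))) :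
    (sval (tau σ c) j < sval (tau σ c) i ↔ sval σ j < sval σ i) := by
  have hvc : (1 : ℤ) ≤ (c : ℤ) := by exact_mod_cast hc1
  rw [sval_tau σ hc1 hcn, sval_tau σ hc1 hcn]
  apply g_lt hvc
  by_cases h1 : In4 c (sval σ i)
  · by_cases h2 : In4 c (sval σ j)
    · exfalso
      have hm1 := mem4 σ hc1 h1
      have hm2 := mem4 σ hc1 h2
      unfold In4 at h1 h2
      rcases hij with hij | hij <;> omega
    · exact Or.inr (not_in4 h2)
  · exact Or.inl (not_in4 h1)

lemma nsp_tau {i j : ℕ} (hij : i % 2 ≠ j % 2 ∨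
    (i ≠ j ∧ ¬(i = posOf σ c ∧ j = posOf σ (c + 1)) ∧ ¬(i = posOf σ (c + 1) ∧ j = posOf σ c))) :
    (sval (tau σ c) i + sval (tau σ c) j < 0 ↔ sval σ i + sval σ j < 0) := by
  have hvc : (1 : ℤ) ≤ (c : ℤ) := by exact_mod_cast hc1
  rw [sval_tau σ hc1 hcn, sval_tau σ hc1 hcn]
  apply g_nsp hvc
  by_cases h1 : In4 c (sval σ i)
  · by_cases h2 : In4 c (sval σ j)
    · exfalso
      have hm1 := mem4 σ hc1 h1
      have hm2 := mem4 σ hc1 h2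
      unfold In4 at h1 h2
      rcases hij with hij | hij <;> omega
    · exact Or.inr (not_in4 h2)
  · exact Or.inl (not_in4 h1)

lemma LD_tau : LD (tau σ c) = LD σ := by
  unfold LD oinvSP onspSP
  congr 1
  · congr 1
    apply Finset.filter_congr
    intro pr hpr
    by_cases hp2 : pr.1 % 2 ≠ pr.2 % 2
    · rw [lt_tau hc1 hcn hpar (Or.inl hp2)]
    · tauto
  · congr 1
    apply Finset.filter_congr
    intro pr hpr
    by_cases hp2 : pr.1 % 2 ≠ pr.2 % 2
    · rw [nsp_tau hc1 hcn hpar (Or.inl hp2)]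
    · tauto

end Tau

lemma ellD_eq_sum (σ : SP n) : ellD σ = ∑ pr ∈ pairs n,
    ((if sval σ pr.2 < sval σ pr.1 then 1 else 0) +
     (if sval σ pr.1 + sval σ pr.2 < 0 then 1 else 0)) := by
  unfold ellD invSP nspSP
  rw [Finset.card_filter, Finset.card_filter, ← Finset.sum_add_distrib]

section Tau2

variable {σ : SP n} {c : ℕ} (hc1 : 1 ≤ c) (hcn : c + 1 ≤ n)
  (hpar : posOf σ c % 2 = posOf σ (c + 1) % 2)

include hc1 hcn hpar

set_option maxHeartbeats 1000000 in
lemma ell_parity_tau : (ellD (tau σ c) + ellD σ) % 2 = 1 := by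
  have hvc : (1 : ℤ) ≤ (c : ℤ) := by exact_mod_cast hc1
  have hp := posOf_range σ hc1 (show c ≤ n by omega)
  have hq := posOf_range σ (c := c + 1) (by omega) hcn
  have hab1 := natAbs_sval_posOf σ hc1 (show c ≤ n by omega)
  have hab2 := natAbs_sval_posOf σ (c := c + 1) (by omega) hcn
  have hpq : posOf σ c ≠ posOf σ (c + 1) := by
    intro h; rw [h] at hab1; omega
  set p := posOf σ c with hp_def
  set q := posOf σ (c + 1) with hq_def
  have he : (min p q, max p q) ∈ pairs n := by
    simp only [pairs, Finset.mem_filter, Finset.mem_product, Finset.mem_Icc]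
    omega
  rw [ellD_eq_sum, ellD_eq_sum, ← Finset.sum_add_distrib,
    ← Finset.add_sum_erase _ _ he]
  have hrest : ∀ pr ∈ (pairs n).erase (min p q, max p q),
      (((if sval (tau σ c) pr.2 < sval (tau σ c) pr.1 then 1 else 0) +
        (if sval (tau σ c) pr.1 + sval (tau σ c) pr.2 < 0 then 1 else 0)) +
       ((if sval σ pr.2 < sval σ pr.1 then 1 else 0) +
        (if sval σ pr.1 + sval σ pr.2 < 0 then 1 else 0))) =
      2 * ((if sval σ pr.2 < sval σ pr.1 then 1 else 0) +
        (if sval σ pr.1 + sval σ pr.2 < 0 then 1 else 0)) := by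
    intro pr hpr
    obtain ⟨hpr_ne, hpr_mem⟩ := Finset.mem_erase.mp hpr
    have hm := pairs_mem hpr_mem
    have hne : ¬(pr.1 = min p q ∧ pr.2 = max p q) := by
      intro hh
      exact hpr_ne (Prod.ext hh.1 hh.2)
    have hcond : pr.1 % 2 ≠ pr.2 % 2 ∨ (pr.1 ≠ pr.2 ∧ ¬(pr.1 = p ∧ pr.2 = q) ∧
        ¬(pr.1 = q ∧ pr.2 = p)) := by
      right
      omega
    simp only [lt_tau hc1 hcn hpar hcond, nsp_tau hc1 hcn hpar hcond]
    omega
  rw [Finset.sum_congr rfl hrest, ← Finset.mul_sum]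
  have hsp := sval_posOf_cases σ hc1 (show c ≤ n by omega)
  have hsq := sval_posOf_cases σ (c := c + 1) (by omega) hcn
  push_cast at hsq
  have hhead : (((if sval (tau σ c) (max p q) < sval (tau σ c) (min p q) then 1 else 0) +
      (if sval (tau σ c) (min p q) + sval (tau σ c) (max p q) < 0 then 1 else 0)) +
     ((if sval σ (max p q) < sval σ (min p q) then 1 else 0) +
      (if sval σ (min p q) + sval σ (max p q) < 0 then 1 else 0))) % 2 = 1 := by
    simp only [sval_tau σ hc1 hcn]
    rcases le_or_gt p q with hle | hlt
    · have h1 : min p q = p := by omega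
      have h2 : max p q = q := by omega
      simp only [h1, h2]
      have := g_exceptional (x := sval σ p) (y := sval σ q) hvc (Or.inl ⟨hsp, hsq⟩)
      omega
    · have h1 : min p q = q := by omega
      have h2 : max p q = p := by omega
      simp only [h1, h2]
      have := g_exceptional (x := sval σ q) (y := sval σ p) hvc (Or.inr ⟨hsq, hsp⟩)
      omega
  dsimp only
  omega

end Tau2

section Tau3

variable {σ : SP n} {c : ℕ} (hc1 : 1 ≤ c) (hcn : c + 1 ≤ n)
  (hpar : posOf σ c % 2 = posOf σ (c + 1) % 2)

include hc1 hcn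

lemma dval_tau (j : ℕ) : dval (tau σ c) j = g (c : ℤ) (dval σ j) := by
  have hvc : (1 : ℤ) ≤ (c : ℤ) := by exact_mod_cast hc1
  unfold dval
  split_ifs with h
  · rw [sval_tau σ hc1 hcn 2, g_neg hvc]
  · rw [sval_tau σ hc1 hcn j]

lemma tau_ne : tau σ c ≠ σ := by
  have hvc : (1 : ℤ) ≤ (c : ℤ) := by exact_mod_cast hc1
  intro heq
  have h1 := sval_tau σ hc1 hcn (posOf σ c)
  rw [heq] at h1
  rcases sval_posOf_cases σ hc1 (by omega) with h2 | h2 <;> rw [h2] at h1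
  · rw [g_at_v hvc] at h1; omega
  · rw [g_at_nv hvc] at h1; omega

lemma tau_tau : tau (tau σ c) c = σ := by
  have hfst : (tau (tau σ c) c).1 = σ.1 := by
    rw [tau, dif_pos ⟨hc1, hcn⟩, tau, dif_pos ⟨hc1, hcn⟩]
    show Equiv.swap _ _ * (Equiv.swap _ _ * σ.1) = σ.1
    rw [← mul_assoc, Equiv.swap_mul_self, one_mul]
  have hsnd : (tau (tau σ c) c).2 = σ.2 := by
    rw [tau_snd, tau_snd]
  exact Prod.ext hfst hsnd

include hpar

lemma dlt_tau (i : ℕ) :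
    (dval (tau σ c) i < dval (tau σ c) (i + 1) ↔ dval σ i < dval σ (i + 1)) := by
  have hvc : (1 : ℤ) ≤ (c : ℤ) := by exact_mod_cast hc1
  rw [dval_tau hc1 hcn, dval_tau hc1 hcn]
  apply g_lt hvc
  by_cases h1 : In4 c (dval σ i)
  · by_cases h2 : In4 c (dval σ (i + 1))
    · exfalso
      rcases Nat.eq_zero_or_pos i with hz | hpos
      · subst hz
        have hs2 : In4 c (sval σ 2) := by
          unfold dval at h1
          rw [if_pos rfl] at h1
          unfold In4 at h1 ⊢
          omega
        have hs1 : In4 c (sval σ 1) := by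
          unfold dval at h2
          rwa [if_neg (by omega)] at h2
        have hm2 := mem4 σ hc1 hs2
        have hm1 := mem4 σ hc1 hs1
        omega
      · have hs1 : In4 c (sval σ i) := by
          unfold dval at h1; rw [if_neg (by omega)] at h1; exact h1
        have hs2 : In4 c (sval σ (i + 1)) := by
          unfold dval at h2; rw [if_neg (by omega)] at h2; exact h2
        have hm1 := mem4 σ hc1 hs1
        have hm2 := mem4 σ hc1 hs2
        omega
    · exact Or.inl (not_in4 h2)
  · exact Or.inr (not_in4 h1)

lemma InQuot_tau (I : Finset ℕ) : InQuot (tau σ c) I ↔ InQuot σ I := by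
  unfold InQuot
  constructor <;> intro h i hi
  · exact (dlt_tau hc1 hcn hpar i).mp (h i hi)
  · exact (dlt_tau hc1 hcn hpar i).mpr (h i hi)

lemma posOf_tau_mod (d : ℕ) : posOf (tau σ c) d % 2 = posOf σ d % 2 := by
  rw [posOf_tau σ hc1 hcn d]
  split_ifs with h1 h2
  · subst h1; omega
  · subst h2; omega
  · rfl

end Tau3

/-- The set of values where the position-parity pattern fails to alternate. -/
def S (σ : SP n) : Finset ℕ :=
  (Finset.Icc 1 (n - 1)).filter (fun d => posOf σ d % 2 = posOf σ (d + 1) % 2)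

lemma S_nonempty_iff (σ : SP n) : (S σ).Nonempty ↔ ¬ Chessboard σ := by
  rw [not_chess_iff]
  unfold S
  constructor
  · rintro ⟨d, hd⟩
    rw [Finset.mem_filter, Finset.mem_Icc] at hd
    exact ⟨d, hd.1.1, by omega, hd.2⟩
  · rintro ⟨d, hd1, hd2, hd⟩
    exact ⟨d, by rw [Finset.mem_filter, Finset.mem_Icc]; exact ⟨⟨hd1, by omega⟩, hd⟩⟩

lemma S_tau {σ : SP n} {c : ℕ} (hc1 : 1 ≤ c) (hcn : c + 1 ≤ n)
    (hpar : posOf σ c % 2 = posOf σ (c + 1) % 2) : S (tau σ c) = S σ := by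
  unfold S
  apply Finset.filter_congr
  intro d _
  rw [posOf_tau_mod hc1 hcn hpar, posOf_tau_mod hc1 hcn hpar]

/-- The sign-reversing involution on non-chessboard elements. -/
def iota0 (σ : SP n) : SP n :=
  if h : (S σ).Nonempty then tau σ ((S σ).min' h) else σ

lemma min'_facts {σ : SP n} (h : (S σ).Nonempty) :
    1 ≤ (S σ).min' h ∧ ((S σ).min' h) + 1 ≤ n ∧
      posOf σ ((S σ).min' h) % 2 = posOf σ ((S σ).min' h + 1) % 2 := by
  have hm := Finset.mem_filter.mp ((S σ).min'_mem h)
  have hm1 := Finset.mem_Icc.mp hm.1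
  exact ⟨hm1.1, by omega, hm.2⟩

section Iota

variable {σ : SP n} (hσ : ¬ Chessboard σ)

include hσ

lemma iota0_eq : iota0 σ = tau σ ((S σ).min' ((S_nonempty_iff σ).mpr hσ)) := by
  rw [iota0]
  exact dif_pos ((S_nonempty_iff σ).mpr hσ)

lemma LD_iota0 : LD (iota0 σ) = LD σ := by
  have h := (S_nonempty_iff σ).mpr hσ
  obtain ⟨hc1, hcn, hpar⟩ := min'_facts h
  rw [iota0_eq hσ]
  exact LD_tau hc1 hcn hpar

lemma ell_iota0 : (ellD (iota0 σ) + ellD σ) % 2 = 1 := by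
  have h := (S_nonempty_iff σ).mpr hσ
  obtain ⟨hc1, hcn, hpar⟩ := min'_facts h
  rw [iota0_eq hσ]
  exact ell_parity_tau hc1 hcn hpar

lemma InQuot_iota0 (I : Finset ℕ) : InQuot (iota0 σ) I ↔ InQuot σ I := by
  have h := (S_nonempty_iff σ).mpr hσ
  obtain ⟨hc1, hcn, hpar⟩ := min'_facts h
  rw [iota0_eq hσ]
  exact InQuot_tau hc1 hcn hpar I

lemma even_iota0 : IsEvenSP (iota0 σ) ↔ IsEvenSP σ := by
  rw [iota0_eq hσ]
  unfold IsEvenSP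
  rw [tau_snd]

lemma notchess_iota0 : ¬ Chessboard (iota0 σ) := by
  have h := (S_nonempty_iff σ).mpr hσ
  obtain ⟨hc1, hcn, hpar⟩ := min'_facts h
  rw [← S_nonempty_iff, iota0_eq hσ, S_tau hc1 hcn hpar]
  exact h

lemma iota0_ne : iota0 σ ≠ σ := by
  have h := (S_nonempty_iff σ).mpr hσ
  obtain ⟨hc1, hcn, hpar⟩ := min'_facts h
  rw [iota0_eq hσ]
  exact tau_ne hc1 hcn

lemma iota0_invol : iota0 (iota0 σ) = σ := by
  have h := (S_nonempty_iff σ).mpr hσ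
  obtain ⟨hc1, hcn, hpar⟩ := min'_facts h
  have hmin' : ∀ (A B : Finset ℕ) (hA : A.Nonempty) (hB : B.Nonempty), A = B →
      A.min' hA = B.min' hB := by
    rintro A B hA hB rfl
    rfl
  rw [iota0_eq hσ]
  have hS : S (tau σ ((S σ).min' h)) = S σ := S_tau hc1 hcn hpar
  have h2 : (S (tau σ ((S σ).min' h))).Nonempty := by rw [hS]; exact h
  have hstep2 : iota0 (tau σ ((S σ).min' h)) =
      tau (tau σ ((S σ).min' h)) ((S (tau σ ((S σ).min' h))).min' h2) := by
    rw [iota0]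
    exact dif_pos h2
  rw [hstep2, hmin' _ _ h2 h hS]
  exact tau_tau hc1 hcn

end Iota

end Aux

/-- Lemma 4.2: the sign-twisted generating function over `D_n^I` is supported on
chessboard elements. -/
theorem stmt10 (n : ℕ) (I : Finset ℕ) (hI : I ⊆ Finset.range n) :
    genD n I =
      ∑ σ ∈ Finset.univ.filter
          (fun σ : SP n => IsEvenSP σ ∧ InQuot σ I ∧ Chessboard σ),
        (-1 : Polynomial ℤ) ^ ellD σ * X ^ LD σ := by
  classical
  unfold genD
  rw [← Finset.sum_filter_add_sum_filter_not
    (Finset.univ.filter (fun σ : SP n => IsEvenSP σ ∧ InQuot σ I)) (fun σ => Chessboard σ)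
    (fun σ => (-1 : Polynomial ℤ) ^ ellD σ * X ^ LD σ)]
  have h1 : (Finset.univ.filter (fun σ : SP n => IsEvenSP σ ∧ InQuot σ I)).filter
      (fun σ => Chessboard σ) =
      Finset.univ.filter (fun σ : SP n => IsEvenSP σ ∧ InQuot σ I ∧ Chessboard σ) := by
    rw [Finset.filter_filter]
    apply Finset.filter_congr
    intro x _
    tauto
  have h2 : ∑ σ ∈ (Finset.univ.filter (fun σ : SP n => IsEvenSP σ ∧ InQuot σ I)).filter
      (fun σ => ¬ Chessboard σ), ((-1 : Polynomial ℤ) ^ ellD σ * X ^ LD σ) = 0 := by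
    apply Finset.sum_involution (fun σ _ => Aux.iota0 σ)
    · intro σ hm
      obtain ⟨h1', hnc⟩ := Finset.mem_filter.mp hm
      have hL := Aux.LD_iota0 hnc
      have hp := Aux.ell_iota0 hnc
      have hsign : (-1 : Polynomial ℤ) ^ ellD σ + (-1) ^ ellD (Aux.iota0 σ) = 0 := by
        rcases Nat.even_or_odd (ellD σ) with he | he
        · have ho : Odd (ellD (Aux.iota0 σ)) := by
            rcases Nat.even_or_odd (ellD (Aux.iota0 σ)) with h' | h'
            · exfalso
              obtain ⟨k, hk⟩ := he
              obtain ⟨k', hk'⟩ := h'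
              omega
            · exact h'
          rw [Even.neg_one_pow he, Odd.neg_one_pow ho]
          ring
        · have ho : Even (ellD (Aux.iota0 σ)) := by
            rcases Nat.even_or_odd (ellD (Aux.iota0 σ)) with h' | h'
            · exact h'
            · exfalso
              obtain ⟨k, hk⟩ := he
              obtain ⟨k', hk'⟩ := h'
              omega
          rw [Odd.neg_one_pow he, Even.neg_one_pow ho]
          ring
      calc (-1 : Polynomial ℤ) ^ ellD σ * X ^ LD σ +
          (-1) ^ ellD (Aux.iota0 σ) * X ^ LD (Aux.iota0 σ)
          = ((-1) ^ ellD σ + (-1) ^ ellD (Aux.iota0 σ)) * X ^ LD σ := by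
            rw [hL]; ring
        _ = 0 := by rw [hsign, zero_mul]
    · intro σ hm _
      obtain ⟨h1', hnc⟩ := Finset.mem_filter.mp hm
      exact Aux.iota0_ne hnc
    · intro σ hm
      obtain ⟨h1', hnc⟩ := Finset.mem_filter.mp hm
      obtain ⟨-, hev, hq⟩ := Finset.mem_filter.mp h1'
      refine Finset.mem_filter.mpr ⟨Finset.mem_filter.mpr
        ⟨Finset.mem_univ _, ?_, ?_⟩, ?_⟩
      · exact (Aux.even_iota0 hnc).mpr hev
      · exact (Aux.InQuot_iota0 hnc I).mpr hq
      · exact Aux.notchess_iota0 hnc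
    · intro σ hm
      obtain ⟨h1', hnc⟩ := Finset.mem_filter.mp hm
      exact Aux.iota0_invol hnc
  rw [h1, h2, add_zero]

end OddLength
end
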